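/- arXiv:2303.04831 — 5 statements merged into one kernel-verified Lean document; each statement's English description precedes it below -/
import Mathlib

section
/- Let (s_{i_1}, ..., s_{i_a}) be any word in the simple transpositions of the symmetric group S_n, and let u ∈ S_n. If some subword (s_{i_{k_1}}, ..., s_{i_{k_c}}) (with k_1 < k_2 < ... < k_c) is a reduced word for u, then the Demazure product s_{i_1} * s_{i_2} * ... * s_{i_a} is greater than or equal to u in Bruhat order. -/
/-- The simple transposition `s_{i+1} = (i+1, i+2)` (1-indexed) in the symmetric group
`S_{n+1}` of permutations of `Fin (n+1)`. -/
def sgen {n : ℕ} (i : Fin n) : Equiv.Perm (Fin (n + 1)) :=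
  Equiv.swap i.castSucc i.succ

/-- Coxeter length of a permutation, as the number of inversions. -/
def len {n : ℕ} (w : Equiv.Perm (Fin n)) : ℕ :=
  (Finset.univ.filter fun p : Fin n × Fin n => p.1 < p.2 ∧ w p.2 < w p.1).card

/-- Product of the word of simple transpositions indexed by `l`. -/
def wordProd {n : ℕ} (l : List (Fin n)) : Equiv.Perm (Fin (n + 1)) :=
  (l.map sgen).prod

/-- `l` is a reduced word for `w`. -/
def IsReducedWord {n : ℕ} (l : List (Fin n)) (w : Equiv.Perm (Fin (n + 1))) : Prop :=
  wordProd l = w ∧ l.length = len w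

/-- The Demazure product `s_{i_1} * s_{i_2} * ⋯ * s_{i_a}` of a word. -/
def demazure {n : ℕ} : List (Fin n) → Equiv.Perm (Fin (n + 1))
  | [] => 1
  | i :: rest =>
    if len (sgen i * demazure rest) > len (demazure rest) then sgen i * demazure rest
    else demazure rest

/-- Bruhat order on `S_n`, via the rank-matrix characterization:
`u ≤ v` iff `#([i] ∩ u[j]) ≥ #([i] ∩ v[j])` for all `i, j`. -/
def BruhatLE {n : ℕ} (u v : Equiv.Perm (Fin n)) : Prop :=
  ∀ i j : ℕ,
    (Finset.univ.filter fun a : Fin n => (a : ℕ) < j ∧ ((v a : ℕ)) < i).card ≤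
    (Finset.univ.filter fun a : Fin n => (a : ℕ) < j ∧ ((u a : ℕ)) < i).card

/-! Compare permutations through the rank matrix `r_w(i, j) = #{a < j | w a < i}`. The Demazure
step `δ_k w` (equal to `s_k w` when that is longer, to `w` otherwise) only changes row `k + 1`,
where `r_{δ_k w}(k + 1, j) = r_w(k, j) + [w⁻¹ k < j ∧ w⁻¹ (k + 1) < j]`. Since
`r_w(k + 2, j) = r_w(k, j) + [w⁻¹ k < j] + [w⁻¹ (k + 1) < j]`, this makes `δ_k` inflationary and
monotone for Bruhat order. Now induct along the subword: a letter outside the subword can only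
increase the Demazure product, while a letter `k` of the subword turns the product `x` of the
rest of the (reduced) subword into `s_k x = δ_k x`, so `x ≤ D` gives `s_k x ≤ δ_k D` by monotonicity. -/

open Finset

section
variable {m n : ℕ}

def rankMatrix (w : Equiv.Perm (Fin m)) (i j : ℕ) : ℕ :=
  #{a : Fin m | (a : ℕ) < j ∧ (w a : ℕ) < i}

theorem bruhatLE_iff_rankMatrix (u v : Equiv.Perm (Fin m)) :
    BruhatLE u v ↔ ∀ i j, rankMatrix v i j ≤ rankMatrix u i j := Iff.rfl

theorem rankMatrix_succ (w : Equiv.Perm (Fin m)) (b : Fin m) (j : ℕ) :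
    rankMatrix w (b + 1) j = rankMatrix w b j + if (w⁻¹ b : ℕ) < j then 1 else 0 := by
  have hlast :
      ({a : Fin m | ((a : ℕ) < j ∧ (w a : ℕ) < b + 1) ∧ ¬(w a : ℕ) < b} : Finset (Fin m)) =
        ({w⁻¹ b} : Finset (Fin m)).filter fun a : Fin m => (a : ℕ) < j := by
    ext a
    simp only [mem_filter, mem_univ, true_and, mem_singleton, Equiv.Perm.eq_inv_iff_eq,
      Fin.ext_iff]
    constructor
    · rintro ⟨⟨ha, h1⟩, h2⟩; exact ⟨by omega, ha⟩
    · rintro ⟨h, ha⟩; exact ⟨⟨ha, by omega⟩, by omega⟩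
  rw [rankMatrix, ← card_filter_add_card_filter_not (fun a : Fin m => (w a : ℕ) < b),
    filter_filter, filter_filter, hlast, filter_singleton, rankMatrix]
  congr 1
  · congr 1; ext a; simp only [mem_filter, mem_univ, true_and]; omega
  · split_ifs <;> rfl

@[simp] theorem sgen_castSucc (k : Fin n) : sgen k k.castSucc = k.succ :=
  Equiv.swap_apply_left _ _

@[simp] theorem sgen_succ (k : Fin n) : sgen k k.succ = k.castSucc :=
  Equiv.swap_apply_right _ _

theorem sgen_mul_sgen_mul (k : Fin n) (w : Equiv.Perm (Fin (n + 1))) :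
    sgen k * (sgen k * w) = w :=
  Equiv.swap_mul_self_mul _ _ _

theorem sgen_mul_inv_apply (k : Fin n) (w : Equiv.Perm (Fin (n + 1))) (x : Fin (n + 1)) :
    (sgen k * w)⁻¹ x = w⁻¹ (sgen k x) := by
  simp [sgen, Equiv.swap_inv]

theorem coe_sgen_apply (k : Fin n) (x : Fin (n + 1)) :
    (sgen k x : ℕ) =
      if (x : ℕ) = k then (k : ℕ) + 1 else if (x : ℕ) = k + 1 then (k : ℕ) else (x : ℕ) := by
  rw [sgen, Equiv.swap_apply_def]
  split_ifs <;> simp_all [Fin.ext_iff]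

theorem coe_sgen_lt_iff_of_ne (k : Fin n) (x : Fin (n + 1)) {i : ℕ} (hi : i ≠ k + 1) :
    (sgen k x : ℕ) < i ↔ (x : ℕ) < i := by
  rw [coe_sgen_apply]
  split_ifs <;> omega

theorem sgen_lt_sgen_iff (k : Fin n) {x y : Fin (n + 1)}
    (hxy : ¬(x = k.castSucc ∧ y = k.succ)) (hyx : ¬(y = k.castSucc ∧ x = k.succ)) :
    sgen k x < sgen k y ↔ x < y := by
  simp only [Fin.lt_def, coe_sgen_apply, Fin.ext_iff, Fin.val_castSucc, Fin.val_succ] at hxy hyx ⊢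
  split_ifs <;> omega

def inversions (w : Equiv.Perm (Fin m)) : Finset (Fin m × Fin m) :=
  {p | p.1 < p.2 ∧ w p.2 < w p.1}

theorem len_eq_card_inversions (w : Equiv.Perm (Fin m)) : len w = #(inversions w) := rfl

theorem inversions_sgen_mul_of_lt (k : Fin n) (w : Equiv.Perm (Fin (n + 1)))
    (h : w⁻¹ k.castSucc < w⁻¹ k.succ) :
    inversions (sgen k * w) = insert (w⁻¹ k.castSucc, w⁻¹ k.succ) (inversions w) := by
  ext ⟨a, b⟩
  simp only [inversions, mem_filter, mem_univ, true_and, mem_insert]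
  simp only [Prod.mk.injEq, Equiv.Perm.mul_apply, Equiv.Perm.eq_inv_iff_eq]
  by_cases hab : w a = k.castSucc ∧ w b = k.succ
  · obtain ⟨ha, hb⟩ := hab
    simp only [ha, hb, sgen_castSucc, sgen_succ, Fin.castSucc_lt_succ, and_true, true_or,
      iff_true]
    simpa [← ha, ← hb] using h
  by_cases hba : w b = k.castSucc ∧ w a = k.succ
  · obtain ⟨hb, ha⟩ := hba
    have hba : ¬a < b := not_lt.mpr (by simpa [← ha, ← hb] using h.le)
    simp only [hab, hba, false_or, false_and]
  · rw [sgen_lt_sgen_iff k hba hab]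
    tauto

theorem len_sgen_mul_of_lt (k : Fin n) (w : Equiv.Perm (Fin (n + 1)))
    (h : w⁻¹ k.castSucc < w⁻¹ k.succ) : len (sgen k * w) = len w + 1 := by
  have hnotMem : (w⁻¹ k.castSucc, w⁻¹ k.succ) ∉ inversions w := by
    simp [inversions, Fin.castSucc_lt_succ.le]
  rw [len_eq_card_inversions, len_eq_card_inversions, inversions_sgen_mul_of_lt k w h,
    card_insert_of_notMem hnotMem]

theorem len_lt_len_sgen_mul_iff (k : Fin n) (w : Equiv.Perm (Fin (n + 1))) :
    len w < len (sgen k * w) ↔ w⁻¹ k.castSucc < w⁻¹ k.succ := by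
  refine ⟨fun hlen => ?_, fun h => by rw [len_sgen_mul_of_lt k w h]; exact Nat.lt_succ_self _⟩
  by_contra hnot
  have hsw : (sgen k * w)⁻¹ k.castSucc < (sgen k * w)⁻¹ k.succ := by
    rw [sgen_mul_inv_apply, sgen_mul_inv_apply, sgen_castSucc, sgen_succ]
    exact (not_lt.mp hnot).lt_of_ne (w⁻¹.injective.ne Fin.castSucc_lt_succ.ne')
  have := len_sgen_mul_of_lt k (sgen k * w) hsw
  rw [sgen_mul_sgen_mul] at this
  omega

theorem len_sgen_mul_le (k : Fin n) (w : Equiv.Perm (Fin (n + 1))) :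
    len (sgen k * w) ≤ len w + 1 := by
  by_cases h : len w < len (sgen k * w)
  · exact (len_sgen_mul_of_lt k w ((len_lt_len_sgen_mul_iff k w).mp h)).le
  · omega

theorem wordProd_cons (k : Fin n) (l : List (Fin n)) :
    wordProd (k :: l) = sgen k * wordProd l := by
  simp [wordProd]

theorem len_one : len (1 : Equiv.Perm (Fin m)) = 0 :=
  card_eq_zero.mpr <| filter_eq_empty_iff.mpr fun _ _ h => lt_asymm h.1 h.2

theorem len_wordProd_le (l : List (Fin n)) : len (wordProd l) ≤ l.length := by
  induction l with
  | nil => simp [wordProd, len_one]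
  | cons k t ih =>
    calc len (wordProd (k :: t)) = len (sgen k * wordProd t) := by rw [wordProd_cons]
      _ ≤ len (wordProd t) + 1 := len_sgen_mul_le k _
      _ ≤ (k :: t).length := by simpa using ih

theorem IsReducedWord.tail {k : Fin n} {l : List (Fin n)} {w : Equiv.Perm (Fin (n + 1))}
    (h : IsReducedWord (k :: l) w) :
    IsReducedWord l (wordProd l) ∧ len (wordProd l) < len (sgen k * wordProd l) := by
  obtain ⟨hw, hlen⟩ := h
  have := len_wordProd_le l
  have := len_sgen_mul_le k (wordProd l)
  simp only [List.length_cons, ← hw, wordProd_cons] at hlen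
  exact ⟨⟨rfl, by omega⟩, by omega⟩

theorem rankMatrix_succ_castSucc (w : Equiv.Perm (Fin (n + 1))) (k : Fin n) (j : ℕ) :
    rankMatrix w (k + 1) j = rankMatrix w k j + if (w⁻¹ k.castSucc : ℕ) < j then 1 else 0 :=
  rankMatrix_succ w k.castSucc j

theorem rankMatrix_sgen_mul_of_ne (k : Fin n) (w : Equiv.Perm (Fin (n + 1))) {i : ℕ}
    (hi : i ≠ k + 1) (j : ℕ) : rankMatrix (sgen k * w) i j = rankMatrix w i j := by
  unfold rankMatrix
  congr 1
  ext a
  simp only [mem_filter, mem_univ, true_and, Equiv.Perm.mul_apply, coe_sgen_lt_iff_of_ne k _ hi]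

theorem rankMatrix_sgen_mul_succ (k : Fin n) (w : Equiv.Perm (Fin (n + 1))) (j : ℕ) :
    rankMatrix (sgen k * w) (k + 1) j =
      rankMatrix w k j + if (w⁻¹ k.succ : ℕ) < j then 1 else 0 := by
  rw [rankMatrix_succ_castSucc, sgen_mul_inv_apply, sgen_castSucc,
    rankMatrix_sgen_mul_of_ne k w (i := k) (by omega)]

theorem rankMatrix_succ_succ (w : Equiv.Perm (Fin (n + 1))) (k : Fin n) (j : ℕ) :
    rankMatrix w (k + 1 + 1) j = rankMatrix w k j + (if (w⁻¹ k.castSucc : ℕ) < j then 1 else 0) +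
      if (w⁻¹ k.succ : ℕ) < j then 1 else 0 := by
  have hsucc := rankMatrix_succ w k.succ j
  rw [Fin.val_succ] at hsucc
  rw [hsucc, rankMatrix_succ_castSucc]

theorem BruhatLE.refl (w : Equiv.Perm (Fin m)) : BruhatLE w w :=
  fun _ _ => le_rfl

theorem BruhatLE.trans {u v w : Equiv.Perm (Fin m)} (huv : BruhatLE u v) (hvw : BruhatLE v w) :
    BruhatLE u w :=
  fun i j => (hvw i j).trans (huv i j)

def demazureStep (k : Fin n) (w : Equiv.Perm (Fin (n + 1))) : Equiv.Perm (Fin (n + 1)) :=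
  if len (sgen k * w) > len w then sgen k * w else w

theorem demazure_cons (k : Fin n) (l : List (Fin n)) :
    demazure (k :: l) = demazureStep k (demazure l) := rfl

theorem demazureStep_of_len_lt {k : Fin n} {w : Equiv.Perm (Fin (n + 1))}
    (h : len w < len (sgen k * w)) : demazureStep k w = sgen k * w :=
  if_pos h

theorem rankMatrix_demazureStep_of_ne (k : Fin n) (w : Equiv.Perm (Fin (n + 1))) {i : ℕ}
    (hi : i ≠ k + 1) (j : ℕ) : rankMatrix (demazureStep k w) i j = rankMatrix w i j := by
  unfold demazureStep
  split_ifs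
  · exact rankMatrix_sgen_mul_of_ne k w hi j
  · rfl

theorem rankMatrix_demazureStep_succ (k : Fin n) (w : Equiv.Perm (Fin (n + 1))) (j : ℕ) :
    rankMatrix (demazureStep k w) (k + 1) j = rankMatrix w k j +
      if (w⁻¹ k.castSucc : ℕ) < j ∧ (w⁻¹ k.succ : ℕ) < j then 1 else 0 := by
  have hne : (w⁻¹ k.castSucc : ℕ) ≠ w⁻¹ k.succ :=
    Fin.val_ne_of_ne (w⁻¹.injective.ne Fin.castSucc_lt_succ.ne)
  by_cases hlen : len w < len (sgen k * w)
  · have hlt : (w⁻¹ k.castSucc : ℕ) < w⁻¹ k.succ := (len_lt_len_sgen_mul_iff k w).mp hlen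
    rw [demazureStep_of_len_lt hlen, rankMatrix_sgen_mul_succ]
    split_ifs <;> omega
  · have hlt : ¬(w⁻¹ k.castSucc : ℕ) < w⁻¹ k.succ :=
      fun h => hlen ((len_lt_len_sgen_mul_iff k w).mpr h)
    rw [demazureStep, if_neg hlen, rankMatrix_succ_castSucc]
    split_ifs <;> omega

theorem le_demazureStep (k : Fin n) (w : Equiv.Perm (Fin (n + 1))) :
    BruhatLE w (demazureStep k w) := by
  rw [bruhatLE_iff_rankMatrix]
  intro i j
  by_cases hi : i = k + 1
  · rw [hi, rankMatrix_demazureStep_succ, rankMatrix_succ_castSucc]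
    split_ifs <;> omega
  · rw [rankMatrix_demazureStep_of_ne k w hi]

theorem demazureStep_mono (k : Fin n) {x y : Equiv.Perm (Fin (n + 1))} (h : BruhatLE x y) :
    BruhatLE (demazureStep k x) (demazureStep k y) := by
  rw [bruhatLE_iff_rankMatrix] at h ⊢
  intro i j
  by_cases hi : i = k + 1
  · -- row `k + 1` of a Demazure step is controlled by rows `k` and `k + 2` of its argument
    have hk := h k j
    have hk2 := h (k + 1 + 1) j
    rw [rankMatrix_succ_succ, rankMatrix_succ_succ] at hk2
    rw [hi, rankMatrix_demazureStep_succ, rankMatrix_demazureStep_succ]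
    split_ifs at * <;> omega
  · rw [rankMatrix_demazureStep_of_ne k x hi, rankMatrix_demazureStep_of_ne k y hi]
    exact h i j

end

/-- If some subword of the word `l` is a reduced word for `u`, then the Demazure
product of `l` is greater than or equal to `u` in Bruhat order. -/
theorem stmt0 {n : ℕ} (l l' : List (Fin n)) (u : Equiv.Perm (Fin (n + 1)))
    (hsub : l'.Sublist l) (hred : IsReducedWord l' u) :
    BruhatLE u (demazure l) := by
  induction hsub generalizing u with
  | slnil =>
    obtain ⟨rfl, -⟩ := hred
    exact BruhatLE.refl _
  | cons k _ ih =>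
    rw [demazure_cons]
    exact (ih u hred).trans (le_demazureStep k _)
  | @cons_cons l₁ _ k _ ih =>
    obtain ⟨hred₁, hlen⟩ := hred.tail
    have hstep : demazureStep k (wordProd l₁) = u := by
      rw [demazureStep_of_len_lt hlen, ← hred.1, wordProd_cons]
    rw [demazure_cons, ← hstep]
    exact demazureStep_mono k (ih _ hred₁)
end

section
/- Let n ≥ k_1 ≥ k_2 ≥ ... ≥ k_m ≥ 1 and let I_1, ..., I_m be subsets of {1,...,n} with |I_j| = k_j. Then I_1, ..., I_m are the columns (read left to right, each written in increasing order top to bottom) of a semistandard Young tableau if and only if there exists a chain v_1 ≤ v_2 ≤ ... ≤ v_m in Bruhat order on S_n such that v_j({1,...,k_j}) = I_j for all j. -/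
/-!
Write `c_s(i) = #{x ∈ s | x < i}`. The `r`-th smallest element of `s` is `< i` iff `r < c_s(i)`,
so the tableau condition between a column `s` and the next, shorter column `t` says exactly
`c_t ≤ c_s` pointwise. If `v[k] = s`, then `c_s(i) = #{a < k | v a < i}` is a rank number of `v`;
Bruhat order is dominance of rank numbers and `k` decreases along the chain, so a Bruhat chain
gives the tableau condition. Conversely, the permutation sending the first `k` positions
increasingly onto `s` and the rest decreasingly onto `sᶜ` has rank numbers
`min p (c_s(i)) + (min n p - (n - c_{sᶜ}(i)))`, which are monotone in `c_s(i)` since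
`c_s(i) + c_{sᶜ}(i) = min n i`; these permutations therefore form a Bruhat chain.
-/

open Finset Equiv

theorem Finset.lt_card_filter_iff_orderEmbOfFin {α : Type*} [LinearOrder α] (s : Finset α)
    {k : ℕ} (h : #s = k) {p : α → Prop} [DecidablePred p] (hp : Antitone p) (b : Fin k) :
    (b : ℕ) < #{x ∈ s | p x} ↔ p (s.orderEmbOfFin h b) := by
  conv_lhs => rw [← map_orderEmbOfFin_univ s h, filter_map, card_map]
  exact Fin.lt_card_filter_univ_iff_apply_of_imp _
    fun _ _ hcb => hp ((s.orderEmbOfFin h).monotone hcb)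

theorem Fin.card_filter_le_val_lt (n l p : ℕ) :
    #{a : Fin n | l ≤ (a : ℕ) ∧ (a : ℕ) < p} = min n p - l := by
  have hval : ({a : Fin n | l ≤ (a : ℕ) ∧ (a : ℕ) < p} : Finset _).map Fin.valEmbedding =
      Ico l (min n p) := by
    ext x
    simp only [mem_map, mem_filter, mem_univ, true_and, Fin.valEmbedding_apply, Fin.exists_iff,
      exists_and_left, exists_prop, exists_eq_right_right, mem_Ico, lt_inf_iff]
    omega
  rw [← card_map, hval, Nat.card_Ico]

namespace Finset

variable {n : ℕ}

def countBelow (s : Finset (Fin n)) (i : ℕ) : ℕ := #{x ∈ s | x.val < i}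

theorem countBelow_le_card (s : Finset (Fin n)) (i : ℕ) : s.countBelow i ≤ #s :=
  card_filter_le _ _

theorem countBelow_add_countBelow_compl (s : Finset (Fin n)) (i : ℕ) :
    s.countBelow i + sᶜ.countBelow i = min n i := by
  rw [countBelow, countBelow, ← card_union_of_disjoint
    (disjoint_filter_filter disjoint_compl_right), ← filter_union, union_compl,
    Fin.card_filter_val_lt]

theorem countBelow_image_perm (σ : Perm (Fin n)) (s : Finset (Fin n)) (i : ℕ) :
    (s.image σ).countBelow i = #{a ∈ s | (σ a : ℕ) < i} := by
  rw [countBelow, filter_image, card_image_of_injective _ σ.injective]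

theorem orderEmbOfFin_lt_iff (s : Finset (Fin n)) {k : ℕ} (h : #s = k) (b : Fin k) (i : ℕ) :
    (s.orderEmbOfFin h b : ℕ) < i ↔ (b : ℕ) < s.countBelow i :=
  (s.lt_card_filter_iff_orderEmbOfFin h (p := fun x : Fin n => x.val < i)
    (fun _ _ hxy hy => lt_of_le_of_lt hxy hy) b).symm

theorem orderEmbOfFin_le_iff_countBelow_le {s t : Finset (Fin n)} {k l : ℕ} (hs : #s = k)
    (ht : #t = l) (hlk : l ≤ k) :
    (∀ (a : ℕ) (ha : a < l),
        (s.orderIsoOfFin hs ⟨a, lt_of_lt_of_le ha hlk⟩).1 ≤ (t.orderIsoOfFin ht ⟨a, ha⟩).1) ↔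
      ∀ i, t.countBelow i ≤ s.countBelow i := by
  simp only [coe_orderIsoOfFin_apply]
  constructor
  · intro hst i
    by_contra! hlt
    have hc : t.countBelow i - 1 < l := by
      have := t.countBelow_le_card i
      omega
    have ht_lt : (t.orderEmbOfFin ht ⟨_, hc⟩ : ℕ) < i :=
      (t.orderEmbOfFin_lt_iff ht _ i).2 (by simp only; omega)
    have hs_lt := (s.orderEmbOfFin_lt_iff hs _ i).1
      (lt_of_le_of_lt (Fin.le_def.1 (hst _ hc)) ht_lt)
    simp only at hs_lt
    omega
  · intro hts a ha
    set i := (t.orderEmbOfFin ht ⟨a, ha⟩ : ℕ) + 1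
    have hs_lt := (s.orderEmbOfFin_lt_iff hs ⟨a, lt_of_lt_of_le ha hlk⟩ i).2
      (lt_of_lt_of_le ((t.orderEmbOfFin_lt_iff ht ⟨a, ha⟩ i).1 (Nat.lt_succ_self _)) (hts i))
    exact Fin.le_def.2 (Nat.lt_succ_iff.1 hs_lt)

theorem card_compl_eq_sub {s : Finset (Fin n)} {k : ℕ} (h : #s = k) : #sᶜ = n - k := by
  rw [card_compl, h, Fintype.card_fin]

/-- Listing `sᶜ` in decreasing order makes the rank numbers of `columnPerm` depend on `s` only
through `s.countBelow`, and monotonically so (`card_filter_columnPerm`). -/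
def columnFun (s : Finset (Fin n)) {k : ℕ} (h : #s = k) (a : Fin n) : Fin n :=
  if ha : (a : ℕ) < k then s.orderEmbOfFin h ⟨a, ha⟩
  else sᶜ.orderEmbOfFin (card_compl_eq_sub h) ⟨n - 1 - a, by omega⟩

theorem columnFun_mem_iff (s : Finset (Fin n)) {k : ℕ} (h : #s = k) (a : Fin n) :
    s.columnFun h a ∈ s ↔ (a : ℕ) < k := by
  unfold columnFun
  split_ifs with ha
  · simp [ha]
  · simpa [ha] using mem_compl.1 (orderEmbOfFin_mem _ _ _)

theorem columnFun_injective (s : Finset (Fin n)) {k : ℕ} (h : #s = k) :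
    Function.Injective (s.columnFun h) := by
  intro a b hab
  have hmem := (s.columnFun_mem_iff h a).symm.trans (hab ▸ s.columnFun_mem_iff h b)
  unfold columnFun at hab
  by_cases ha : (a : ℕ) < k
  · rw [dif_pos ha, dif_pos (hmem.1 ha)] at hab
    exact Fin.ext (Fin.mk.inj_iff.1 ((s.orderEmbOfFin h).injective hab))
  · rw [dif_neg ha, dif_neg (mt hmem.2 ha)] at hab
    have := Fin.mk.inj_iff.1 ((sᶜ.orderEmbOfFin _).injective hab)
    omega

noncomputable def columnPerm (s : Finset (Fin n)) {k : ℕ} (h : #s = k) : Perm (Fin n) :=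
  Equiv.ofBijective _ (Finite.injective_iff_bijective.1 (s.columnFun_injective h))

theorem image_columnPerm (s : Finset (Fin n)) {k : ℕ} (h : #s = k) :
    image (s.columnPerm h) {a | a.val < k} = s := by
  refine eq_of_subset_of_card_le (fun x hx => ?_) ?_
  · obtain ⟨a, ha, rfl⟩ := mem_image.1 hx
    exact (s.columnFun_mem_iff h a).2 (mem_filter.1 ha).2
  · rw [card_image_of_injective _ (s.columnPerm h).injective, Fin.card_filter_val_lt, ← h]
    exact le_min (card_le_univ s |>.trans_eq (Fintype.card_fin n)) le_rfl

theorem card_filter_columnPerm (s : Finset (Fin n)) {k : ℕ} (h : #s = k) (p i : ℕ) :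
    #{a | a.val < p ∧ (s.columnPerm h a).val < i} =
      min n (min p (s.countBelow i)) + (min n p - (n - sᶜ.countBelow i)) := by
  have hs := h ▸ s.countBelow_le_card i
  have hsc := card_compl_eq_sub h ▸ sᶜ.countBelow_le_card i
  have hsplit : ∀ a : Fin n, ((a : ℕ) < p ∧ (s.columnPerm h a : ℕ) < i) ↔
      (a : ℕ) < min p (s.countBelow i) ∨ (n - sᶜ.countBelow i ≤ (a : ℕ) ∧ (a : ℕ) < p) := by
    intro a
    change _ ∧ (s.columnFun h a : ℕ) < i ↔ _
    unfold columnFun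
    split_ifs with ha
    · rw [orderEmbOfFin_lt_iff]
      simp only
      omega
    · rw [orderEmbOfFin_lt_iff]
      have := a.isLt
      simp only
      omega
  rw [filter_congr fun a _ => hsplit a, filter_or, card_union_of_disjoint, Fin.card_filter_val_lt,
    Fin.card_filter_le_val_lt]
  refine disjoint_filter.2 fun a _ ha => ?_
  omega

theorem bruhatLE_columnPerm {s t : Finset (Fin n)} {k l : ℕ} (hs : #s = k) (ht : #t = l)
    (hts : ∀ i, t.countBelow i ≤ s.countBelow i) :
    BruhatLE (s.columnPerm hs) (t.columnPerm ht) := by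
  intro i p
  rw [card_filter_columnPerm, card_filter_columnPerm]
  have := s.countBelow_add_countBelow_compl i
  have := t.countBelow_add_countBelow_compl i
  have := hts i
  omega

theorem countBelow_le_of_bruhatLE {u v : Perm (Fin n)} (huv : BruhatLE u v)
    {s t : Finset (Fin n)} {k l : ℕ} (hlk : l ≤ k) (hu : image u {a | a.val < k} = s)
    (hv : image v {a | a.val < l} = t) (i : ℕ) : t.countBelow i ≤ s.countBelow i := by
  rw [← hu, ← hv, countBelow_image_perm, countBelow_image_perm, filter_filter, filter_filter]
  calc #{a | a.val < l ∧ (v a).val < i}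
      ≤ #{a | a.val < l ∧ (u a).val < i} := huv i l
    _ ≤ #{a | a.val < k ∧ (u a).val < i} :=
      card_le_card (monotone_filter_right _ fun _ _ ha => ⟨lt_of_lt_of_le ha.1 hlk, ha.2⟩)

end Finset

/-- Let `n ≥ k 0 ≥ k 1 ≥ ⋯ ≥ k (m-1) ≥ 1` and let `I j` be subsets of `{1,…,n}`
(modelled as `Fin n`) with `(I j).card = k j`.  Then the `I j` are the columns of a
semistandard Young tableau (the condition that rows weakly increase across
consecutive columns) iff there is a chain `v_1 ≤ v_2 ≤ ⋯ ≤ v_m` in Bruhat order with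
`v_j({1,…,k_j}) = I_j` for all `j`. -/
theorem stmt5 (n m : ℕ) (k : Fin m → ℕ)
    (hdec : ∀ j j' : Fin m, j ≤ j' → k j' ≤ k j)
    (I : Fin m → Finset (Fin n)) (hcard : ∀ j, (I j).card = k j) :
    (∀ (j : ℕ) (hj : j + 1 < m) (a : ℕ) (ha : a < k ⟨j + 1, hj⟩),
        ((I ⟨j, by omega⟩).orderIsoOfFin (hcard ⟨j, by omega⟩)
            ⟨a, lt_of_lt_of_le ha
              (hdec ⟨j, by omega⟩ ⟨j + 1, hj⟩ (Fin.mk_le_mk.mpr (Nat.le_succ j)))⟩).1 ≤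
          ((I ⟨j + 1, hj⟩).orderIsoOfFin (hcard ⟨j + 1, hj⟩) ⟨a, ha⟩).1) ↔
      (∃ v : Fin m → Equiv.Perm (Fin n),
        (∀ (j : ℕ) (hj : j + 1 < m), BruhatLE (v ⟨j, by omega⟩) (v ⟨j + 1, hj⟩)) ∧
        ∀ j : Fin m,
          (Finset.univ.filter fun a : Fin n => (a : ℕ) < k j).image (v j) = I j) := by
  have hk (j : ℕ) (hj : j + 1 < m) : k ⟨j + 1, hj⟩ ≤ k ⟨j, by omega⟩ :=
    hdec _ _ (Fin.mk_le_mk.mpr (Nat.le_succ j))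
  have hcol (j : ℕ) (hj : j + 1 < m) :=
    orderEmbOfFin_le_iff_countBelow_le (hcard ⟨j, by omega⟩) (hcard ⟨j + 1, hj⟩) (hk j hj)
  constructor
  · intro htab
    exact ⟨fun j => (I j).columnPerm (hcard j),
      fun j hj => bruhatLE_columnPerm _ _ ((hcol j hj).1 (htab j hj)),
      fun j => (I j).image_columnPerm (hcard j)⟩
  · rintro ⟨v, hchain, himage⟩ j hj
    exact (hcol j hj).2
      (countBelow_le_of_bruhatLE (hchain j hj) (hk j hj) (himage _) (himage _))
end

section
/- Let u ∈ S_n and let J be a k-element subset of {1,...,n} with u[k] ⪯ J, where u[k] = u({1,...,k}) and ⪯ is the componentwise order on k-element subsets. Then the set {x ∈ S_n : u ≤ x in Bruhat order and x[k] = J} is nonempty and has a unique minimal element with respect to Bruhat order. -/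
open Finset
set_option linter.unusedSectionVars false

namespace Stmt6Aux

variable {n : ℕ}

/-- count of positions `a < j` with value `v a < i`. -/
def cnt (n : ℕ) (v : Fin n → Fin n) (j i : ℕ) : ℕ :=
  (Finset.univ.filter fun a : Fin n => (a : ℕ) < j ∧ ((v a : ℕ)) < i).card

lemma posCard (n j : ℕ) : (Finset.univ.filter fun a : Fin n => (a : ℕ) < j).card = min j n := by
  have h1 : (Finset.univ.filter fun a : Fin n => (a : ℕ) < j)
      = (Finset.range (min j n)).attachFin (fun m hm => by simp at hm; omega) := by
    ext a
    simp only [Finset.mem_filter, Finset.mem_univ, true_and, Finset.mem_attachFin,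
      Finset.mem_range]
    have := a.isLt
    omega
  rw [h1, Finset.card_attachFin, Finset.card_range]

lemma cnt_zero (v : Fin n → Fin n) (j : ℕ) : cnt n v j 0 = 0 := by
  simp [cnt]

lemma cnt_zero_j (v : Fin n → Fin n) (i : ℕ) : cnt n v 0 i = 0 := by
  simp [cnt]

lemma cnt_mono_i (v : Fin n → Fin n) (j : ℕ) {i i' : ℕ} (h : i ≤ i') :
    cnt n v j i ≤ cnt n v j i' := by
  apply Finset.card_le_card
  intro a ha
  simp only [Finset.mem_filter] at *
  exact ⟨ha.1, ha.2.1, lt_of_lt_of_le ha.2.2 h⟩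

lemma cnt_mono_j (v : Fin n → Fin n) {j j' : ℕ} (i : ℕ) (h : j ≤ j') :
    cnt n v j i ≤ cnt n v j' i := by
  apply Finset.card_le_card
  intro a ha
  simp only [Finset.mem_filter] at *
  exact ⟨ha.1, lt_of_lt_of_le ha.2.1 h, ha.2.2⟩

lemma cnt_le_j (v : Fin n → Fin n) (j i : ℕ) : cnt n v j i ≤ min j n := by
  rw [← posCard n j]
  apply Finset.card_le_card
  intro a ha
  simp only [Finset.mem_filter] at *
  exact ⟨ha.1, ha.2.1⟩

lemma cnt_step (v : Fin n → Fin n) (hv : Function.Injective v) (j i : ℕ) :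
    cnt n v j (i + 1) ≤ cnt n v j i + 1 := by
  have hsplit : (Finset.univ.filter fun a : Fin n => (a : ℕ) < j ∧ ((v a : ℕ)) < i + 1)
      ⊆ (Finset.univ.filter fun a : Fin n => (a : ℕ) < j ∧ ((v a : ℕ)) < i)
        ∪ (Finset.univ.filter fun a : Fin n => ((v a : ℕ)) = i) := by
    intro a ha
    simp only [Finset.mem_filter, Finset.mem_union, Finset.mem_univ, true_and] at *
    omega
  calc cnt n v j (i+1) ≤ _ := Finset.card_le_card hsplit
    _ ≤ _ + _ := Finset.card_union_le _ _
    _ ≤ cnt n v j i + 1 := by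
        apply Nat.add_le_add_left
        apply Finset.card_le_one.mpr
        intro a ha b hb
        simp only [Finset.mem_filter] at *
        exact hv (Fin.ext (ha.2.trans hb.2.symm))

lemma cnt_succ_j (v : Fin n → Fin n) {j : ℕ} (hj : j < n) (i : ℕ) :
    cnt n v (j + 1) i = cnt n v j i + (if ((v ⟨j, hj⟩ : ℕ)) < i then 1 else 0) := by
  have hsplit : (Finset.univ.filter fun a : Fin n => (a : ℕ) < j + 1 ∧ ((v a : ℕ)) < i)
      = (Finset.univ.filter fun a : Fin n => (a : ℕ) < j ∧ ((v a : ℕ)) < i)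
        ∪ (Finset.univ.filter fun a : Fin n => a = ⟨j, hj⟩ ∧ ((v a : ℕ)) < i) := by
    ext a
    simp only [Finset.mem_filter, Finset.mem_union, Finset.mem_univ, true_and]
    constructor
    · rintro ⟨h1, h2⟩
      rcases Nat.lt_succ_iff_lt_or_eq.mp h1 with h | h
      · exact Or.inl ⟨h, h2⟩
      · exact Or.inr ⟨Fin.ext h, h2⟩
    · rintro (⟨h1, h2⟩ | ⟨h1, h2⟩)
      · exact ⟨Nat.lt_succ_of_lt h1, h2⟩
      · subst h1; exact ⟨Nat.lt_succ_self _, h2⟩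
  rw [cnt, hsplit, Finset.card_union_of_disjoint, ← cnt]
  · congr 1
    by_cases h : ((v ⟨j, hj⟩ : ℕ)) < i
    · rw [if_pos h]
      have : (Finset.univ.filter fun a : Fin n => a = ⟨j, hj⟩ ∧ ((v a : ℕ)) < i) = {⟨j, hj⟩} := by
        ext a; simp only [Finset.mem_filter, Finset.mem_univ, true_and, Finset.mem_singleton]
        constructor
        · exact fun h => h.1
        · rintro rfl; exact ⟨rfl, h⟩
      rw [this, Finset.card_singleton]
    · rw [if_neg h]
      have : (Finset.univ.filter fun a : Fin n => a = ⟨j, hj⟩ ∧ ((v a : ℕ)) < i) = ∅ := by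
        ext a; simp only [Finset.mem_filter, Finset.mem_univ, true_and, Finset.notMem_empty,
          iff_false, not_and]
        rintro rfl; exact h
      rw [this, Finset.card_empty]
  · rw [Finset.disjoint_left]
    intro a ha hb
    simp only [Finset.mem_filter] at *
    rcases hb.2.1 with rfl
    exact absurd ha.2.1 (by simp)

lemma cnt_min (v : Fin n → Fin n) (j i : ℕ) : cnt n v j i = cnt n v (min j n) i := by
  unfold cnt
  congr 1
  apply Finset.filter_congr
  intro a _
  have : (a : ℕ) < n := a.2
  constructor <;> (rintro ⟨h1, h2⟩; exact ⟨by omega, h2⟩)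

lemma cnt_sat (v : Fin n → Fin n) {j i : ℕ} (hj : j ≤ n) (hi : n ≤ i) :
    cnt n v j i = j := by
  have : (Finset.univ.filter fun a : Fin n => (a : ℕ) < j ∧ ((v a : ℕ)) < i)
      = (Finset.univ.filter fun a : Fin n => (a : ℕ) < j) := by
    apply Finset.filter_congr
    intro a _
    have : ((v a : ℕ)) < n := (v a).2
    constructor
    · exact fun h => h.1
    · exact fun h => ⟨h, by omega⟩
  rw [cnt, this, posCard, Nat.min_eq_left hj]

/-- complement count -/
lemma cnt_compl (v : Fin n → Fin n) {j : ℕ} (hj : j ≤ n) (i : ℕ) :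
    cnt n v j i + (Finset.univ.filter fun a : Fin n => (a : ℕ) < j ∧ ¬ ((v a : ℕ)) < i).card
      = j := by
  rw [cnt, ← Finset.card_union_of_disjoint]
  · rw [← Finset.filter_or]
    have : (Finset.univ.filter fun a : Fin n =>
        ((a : ℕ) < j ∧ ((v a : ℕ)) < i) ∨ ((a : ℕ) < j ∧ ¬ ((v a : ℕ)) < i))
        = (Finset.univ.filter fun a : Fin n => (a : ℕ) < j) := by
      apply Finset.filter_congr; intro a _; tauto
    rw [this, posCard, Nat.min_eq_left hj]
  · rw [Finset.disjoint_left]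
    intro a ha hb
    simp only [Finset.mem_filter] at *
    exact hb.2.2 ha.2.2

end Stmt6Aux
namespace Stmt6Aux

variable {n : ℕ}

/-- indicator of membership of `i` in the value-set of `J`. -/
def eJ (J : Finset (Fin n)) (i : ℕ) : ℕ := if i ∈ J.image Fin.val then 1 else 0

/-- count of elements of `J` with value `< i`. -/
def cJf (J : Finset (Fin n)) (i : ℕ) : ℕ := (J.filter fun t : Fin n => (t : ℕ) < i).card

lemma eJ_le_one (J : Finset (Fin n)) (i : ℕ) : eJ J i ≤ 1 := by
  unfold eJ; split <;> omega

lemma eJ_eq_zero_of_ge (J : Finset (Fin n)) {i : ℕ} (hi : n ≤ i) : eJ J i = 0 := by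
  unfold eJ
  rw [if_neg]
  simp only [Finset.mem_image, not_exists]
  rintro t ⟨_, rfl⟩
  exact absurd t.isLt (by omega)

lemma cJf_step (J : Finset (Fin n)) (i : ℕ) : cJf J (i + 1) = cJf J i + eJ J i := by
  unfold cJf eJ
  by_cases h : i ∈ J.image Fin.val
  · rw [if_pos h]
    simp only [Finset.mem_image] at h
    obtain ⟨t, ht, rfl⟩ := h
    have hsplit : (J.filter fun s : Fin n => (s : ℕ) < (t : ℕ) + 1)
        = (J.filter fun s : Fin n => (s : ℕ) < (t : ℕ)) ∪ {t} := by
      ext s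
      simp only [Finset.mem_filter, Finset.mem_union, Finset.mem_singleton]
      constructor
      · rintro ⟨hs, hlt⟩
        rcases Nat.lt_succ_iff_lt_or_eq.mp hlt with h | h
        · exact Or.inl ⟨hs, h⟩
        · exact Or.inr (Fin.ext h)
      · rintro (⟨hs, hlt⟩ | rfl)
        · exact ⟨hs, Nat.lt_succ_of_lt hlt⟩
        · exact ⟨ht, Nat.lt_succ_self _⟩
    rw [hsplit, Finset.card_union_of_disjoint, Finset.card_singleton]
    rw [Finset.disjoint_left]
    intro s hs hs'
    simp only [Finset.mem_filter, Finset.mem_singleton] at *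
    subst hs'
    exact absurd hs.2 (lt_irrefl _)
  · rw [if_neg h, Nat.add_zero]
    congr 1
    apply Finset.filter_congr
    intro t ht
    simp only [Finset.mem_image, not_exists] at h
    have : (t : ℕ) ≠ i := fun he => h t ⟨ht, he⟩
    constructor <;> intro hlt <;> omega

lemma cJf_zero (J : Finset (Fin n)) : cJf J 0 = 0 := by simp [cJf]

lemma cJf_mono (J : Finset (Fin n)) {i i' : ℕ} (h : i ≤ i') : cJf J i ≤ cJf J i' := by
  apply Finset.card_le_card
  intro t ht
  simp only [Finset.mem_filter] at *
  exact ⟨ht.1, lt_of_lt_of_le ht.2 h⟩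

lemma cJf_sat (J : Finset (Fin n)) {i : ℕ} (hi : n ≤ i) : cJf J i = J.card := by
  unfold cJf
  congr 1
  apply Finset.filter_true_of_mem
  intro t _
  exact lt_of_lt_of_le t.isLt hi

/-- The forward recursion: maximal count function for levels `j ≤ k`. -/
def gf (u : Equiv.Perm (Fin n)) (J : Finset (Fin n)) (j : ℕ) : ℕ → ℕ
  | 0 => 0
  | i + 1 => min (gf u J j i + eJ J i) (cnt n (⇑u) j (i + 1))

variable (u : Equiv.Perm (Fin n)) (J : Finset (Fin n))

lemma gf_le_cA (j i : ℕ) : gf u J j i ≤ cnt n (⇑u) j i := by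
  cases i with
  | zero => simp [gf, cnt_zero]
  | succ i => exact min_le_right _ _

lemma gf_mono (j i : ℕ) : gf u J j i ≤ gf u J j (i + 1) := by
  apply le_min
  · omega
  · exact le_trans (gf_le_cA u J j i) (cnt_mono_i _ _ (Nat.le_succ _))

lemma gf_step (j i : ℕ) : gf u J j (i + 1) ≤ gf u J j i + eJ J i := min_le_left _ _

lemma gf_le_cJ (j i : ℕ) : gf u J j i ≤ cJf J i := by
  induction i with
  | zero => simp [gf, cJf_zero]
  | succ i ih =>
      calc gf u J j (i+1) ≤ gf u J j i + eJ J i := gf_step u J j i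
        _ ≤ cJf J i + eJ J i := by omega
        _ = cJf J (i+1) := (cJf_step J i).symm

lemma gf_mono_j {j j' : ℕ} (h : j ≤ j') (i : ℕ) : gf u J j i ≤ gf u J j' i := by
  induction i with
  | zero => simp [gf]
  | succ i ih =>
      apply le_min
      · exact le_trans (gf_step u J j i) (by omega)
      · exact le_trans (gf_le_cA u J j (i+1)) (cnt_mono_j _ _ h)

lemma gf_succ_le (j i : ℕ) : gf u J (j + 1) i ≤ gf u J j i + 1 := by
  induction i with
  | zero => simp [gf]
  | succ i ih =>
      have h1 : gf u J (j+1) (i+1) ≤ gf u J (j+1) i + eJ J i := gf_step u J (j+1) i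
      have h2 : gf u J (j+1) (i+1) ≤ cnt n (⇑u) (j+1) (i+1) := gf_le_cA u J (j+1) (i+1)
      have h3 : cnt n (⇑u) (j+1) (i+1) ≤ cnt n (⇑u) j (i+1) + 1 := by
        rcases Nat.lt_or_ge j n with hj | hj
        · rw [cnt_succ_j (⇑u) hj (i+1)]
          split <;> omega
        · rw [cnt_min (⇑u) (j+1), cnt_min (⇑u) j, Nat.min_eq_right (by omega),
            Nat.min_eq_right hj]
          omega
      have h4 : gf u J j (i+1) = min (gf u J j i + eJ J i) (cnt n (⇑u) j (i+1)) := rfl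
      omega

section WithHyp

variable (k : ℕ) (hk : k ≤ n) (hcnt : ∀ i, cJf J i ≤ cnt n (⇑u) k i) (hJk : J.card = k)

include hk hcnt hJk in
/-- H1: for `j ≤ k`, `cJf i + j ≤ cA j i + k`. -/
lemma H1 {j : ℕ} (hj : j ≤ k) (i : ℕ) : cJf J i + j ≤ cnt n (⇑u) j i + k := by
  have e1 := cnt_compl (⇑u) (le_trans hj hk) i
  have e2 := cnt_compl (⇑u) hk i
  have e3 : (Finset.univ.filter fun a : Fin n => (a : ℕ) < j ∧ ¬ ((u a : ℕ)) < i).card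
      ≤ (Finset.univ.filter fun a : Fin n => (a : ℕ) < k ∧ ¬ ((u a : ℕ)) < i).card := by
    apply Finset.card_le_card
    intro a ha
    simp only [Finset.mem_filter] at *
    exact ⟨ha.1, lt_of_lt_of_le ha.2.1 hj, ha.2.2⟩
  have e4 := hcnt i
  omega

include hk hcnt hJk in
lemma gf_lower {j : ℕ} (hj : j ≤ k) (i : ℕ) : j + cJf J i ≤ gf u J j i + k := by
  induction i with
  | zero => rw [cJf_zero]; simp [gf]; omega
  | succ i ih =>
      have h1 := H1 u J k hk hcnt hJk hj (i+1)
      have h2 := cJf_step J i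
      have h3 : gf u J j (i+1) = min (gf u J j i + eJ J i) (cnt n (⇑u) j (i+1)) := rfl
      omega

include hk hcnt hJk in
lemma gf_top {j : ℕ} (hj : j ≤ k) {i : ℕ} (hi : n ≤ i) : gf u J j i = j := by
  have h1 := gf_lower u J k hk hcnt hJk hj i
  have h2 : cJf J i = k := by rw [cJf_sat J hi, hJk]
  have h3 := gf_le_cA u J j i
  have h4 := cnt_le_j (⇑u) j i
  omega

include hk hcnt hJk in
lemma gf_k_eq_cJ (i : ℕ) : gf u J k i = cJf J i := by
  refine le_antisymm (gf_le_cJ u J k i) ?_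
  induction i with
  | zero => rw [cJf_zero]; omega
  | succ i ih =>
      have h1 := cJf_step J i
      have h2 := hcnt (i+1)
      have h3 : gf u J k (i+1) = min (gf u J k i + eJ J i) (cnt n (⇑u) k (i+1)) := rfl
      omega

lemma gf_ub (j : ℕ) {i' i : ℕ} (h : i' ≤ i) :
    gf u J j i ≤ cnt n (⇑u) j i' + (cJf J i - cJf J i') := by
  induction i with
  | zero =>
      have : i' = 0 := by omega
      subst this
      simp [gf]
  | succ i ih =>
      rcases Nat.lt_or_ge i' (i+1) with hlt | hge
      · have h2 := ih (by omega)
        have h3 := gf_step u J j i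
        have h4 := cJf_step J i
        have h5 : cJf J i' ≤ cJf J i := cJf_mono J (by omega)
        omega
      · have : i' = i + 1 := by omega
        subst this
        have := gf_le_cA u J j (i+1)
        omega

lemma gf_attained (j i : ℕ) :
    ∃ i' ≤ i, gf u J j i = cnt n (⇑u) j i' + (cJf J i - cJf J i') ∧ cJf J i' ≤ cJf J i := by
  induction i with
  | zero => exact ⟨0, le_refl _, by simp [gf, cnt_zero, cJf_zero], le_refl _⟩
  | succ i ih =>
      have h3 : gf u J j (i+1) = min (gf u J j i + eJ J i) (cnt n (⇑u) j (i+1)) := rfl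
      rcases le_or_gt (cnt n (⇑u) j (i+1)) (gf u J j i + eJ J i) with hc | hc
      · exact ⟨i+1, le_refl _, by omega, le_refl _⟩
      · obtain ⟨i', hi', heq, hle'⟩ := ih
        refine ⟨i', by omega, ?_, ?_⟩
        · have h4 := cJf_step J i
          have h5 : cJf J i' ≤ cJf J i := hle'
          omega
        · have h4 := cJf_step J i
          omega

end WithHyp

end Stmt6Aux
namespace Stmt6Aux

variable {n : ℕ} (u : Equiv.Perm (Fin n)) (J : Finset (Fin n))

lemma gf_jump_mono (k : ℕ) (hk : k ≤ n) {j : ℕ} (hj : j + 1 ≤ k) {i : ℕ}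
    (hjump : gf u J j (i + 1) = gf u J j i + 1) :
    gf u J (j + 1) (i + 1) = gf u J (j + 1) i + 1 := by
  have hjn : j < n := by omega
  have hei : eJ J i = 1 := by
    have h1 := gf_step u J j i
    have h2 := eJ_le_one J i
    omega
  by_contra hne
  have h3 : gf u J (j+1) (i+1) = min (gf u J (j+1) i + eJ J i) (cnt n (⇑u) (j+1) (i+1)) := rfl
  have h4 := gf_mono u J (j+1) i
  have hA : cnt n (⇑u) (j+1) (i+1) ≤ gf u J (j+1) i := by omega
  obtain ⟨i', hi', heq, hle'⟩ := gf_attained u J j i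
  have hub := gf_ub u J (j+1) hi'
  have hkey : cnt n (⇑u) j (i+1) ≤ gf u J j i := by
    rw [heq]
    have c1 := cnt_succ_j (⇑u) hjn (i+1)
    have c2 := cnt_succ_j (⇑u) hjn i'
    have : cnt n (⇑u) (j+1) (i+1) ≤ cnt n (⇑u) (j+1) i' + (cJf J i - cJf J i') := by omega
    rw [c1, c2] at this
    split_ifs at this with h1 h2 h2 <;> omega
  have h5 : gf u J j (i+1) ≤ cnt n (⇑u) j (i+1) := gf_le_cA u J j (i+1)
  omega

/-- backwards recursion, indexed by distance from `n`. -/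
def Maux (u : Equiv.Perm (Fin n)) (J : Finset (Fin n)) (j : ℕ) : ℕ → ℕ
  | 0 => j
  | d + 1 => min (cnt n (⇑u) j (n - (d + 1))) (Maux u J j d - eJ J (n - (d + 1)))

/-- the maximal count function for levels `j ≥ k`. -/
def Mf (u : Equiv.Perm (Fin n)) (J : Finset (Fin n)) (j i : ℕ) : ℕ := Maux u J j (n - i)

lemma Mf_sat (j : ℕ) {i : ℕ} (hi : n ≤ i) : Mf u J j i = j := by
  unfold Mf
  rw [Nat.sub_eq_zero_of_le hi]
  rfl

lemma Mf_rec (j : ℕ) {i : ℕ} (hi : i < n) :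
    Mf u J j i = min (cnt n (⇑u) j i) (Mf u J j (i + 1) - eJ J i) := by
  unfold Mf
  have h1 : n - i = (n - (i + 1)) + 1 := by omega
  rw [h1]
  show min (cnt n (⇑u) j (n - (n - (i+1) + 1))) (Maux u J j (n - (i+1)) - eJ J (n - (n - (i+1) + 1))) = _
  have h2 : n - (n - (i + 1) + 1) = i := by omega
  rw [h2]

lemma Mf_le_cA {j : ℕ} (hj : j ≤ n) {i : ℕ} (hi : i ≤ n) :
    Mf u J j i ≤ cnt n (⇑u) j i := by
  rcases Nat.lt_or_ge i n with h | h
  · rw [Mf_rec u J j h]; exact min_le_left _ _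
  · rw [Mf_sat u J j h, cnt_sat (⇑u) hj h]

lemma Mf_mono (j i : ℕ) : Mf u J j i ≤ Mf u J j (i + 1) := by
  rcases Nat.lt_or_ge i n with h | h
  · rw [Mf_rec u J j h]
    exact le_trans (min_le_right _ _) (Nat.sub_le _ _)
  · rw [Mf_sat u J j h, Mf_sat u J j (show n ≤ i + 1 by omega)]

lemma Mf_step {j : ℕ} (hj : j ≤ n) (i : ℕ) : Mf u J j (i + 1) ≤ Mf u J j i + 1 := by
  rcases Nat.lt_or_ge i n with h | h
  · rw [Mf_rec u J j h]
    have h1 : Mf u J j (i+1) ≤ cnt n (⇑u) j (i+1) := Mf_le_cA u J hj (by omega)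
    have h2 : cnt n (⇑u) j (i+1) ≤ cnt n (⇑u) j i + 1 := cnt_step (⇑u) u.injective j i
    have h3 := eJ_le_one J i
    rcases le_total (cnt n (⇑u) j i) (Mf u J j (i+1) - eJ J i) with hc | hc
    · rw [min_eq_left hc]; omega
    · rw [min_eq_right hc]; omega
  · rw [Mf_sat u J j h, Mf_sat u J j (show n ≤ i + 1 by omega)]
    omega

lemma Mf_zero {j : ℕ} (hj : j ≤ n) : Mf u J j 0 = 0 := by
  rcases Nat.lt_or_ge 0 n with h | h
  · rw [Mf_rec u J j h]
    have := cnt_zero (⇑u) j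
    omega
  · rw [Mf_sat u J j (by omega)]; omega

lemma Mf_mono_j {j j' : ℕ} (h : j ≤ j') (i : ℕ) : Mf u J j i ≤ Mf u J j' i := by
  suffices H : ∀ d, Maux u J j d ≤ Maux u J j' d from H (n - i)
  intro d
  induction d with
  | zero => exact h
  | succ d ih =>
      show min _ _ ≤ min _ _
      apply le_min
      · exact le_trans (min_le_left _ _) (cnt_mono_j (⇑u) _ h)
      · exact le_trans (min_le_right _ _) (by omega)

lemma Mf_succ_le {j : ℕ} (hj : j + 1 ≤ n) (i : ℕ) : Mf u J (j + 1) i ≤ Mf u J j i + 1 := by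
  suffices H : ∀ d, Maux u J (j+1) d ≤ Maux u J j d + 1 from H (n - i)
  intro d
  induction d with
  | zero => rfl
  | succ d ih =>
      show min _ _ ≤ min _ _ + 1
      have hc : cnt n (⇑u) (j+1) (n - (d+1)) ≤ cnt n (⇑u) j (n - (d+1)) + 1 := by
        rw [cnt_succ_j (⇑u) (by omega : j < n)]
        split <;> omega
      rcases le_total (cnt n (⇑u) j (n - (d+1))) (Maux u J j d - eJ J (n - (d+1))) with h | h
      · rw [min_eq_left h]
        exact le_trans (min_le_left _ _) (by omega)
      · rw [min_eq_right h]
        exact le_trans (min_le_right _ _) (by omega)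

section WithHyp

variable (k : ℕ) (hk : k ≤ n) (hcnt : ∀ i, cJf J i ≤ cnt n (⇑u) k i) (hJk : J.card = k)

include hk hcnt hJk in
lemma Mf_lower {j : ℕ} (hkj : k ≤ j) (i : ℕ) : cJf J i ≤ Mf u J j i := by
  have Haux : ∀ d, cJf J (n - d) ≤ Maux u J j d := by
    intro d
    induction d with
    | zero =>
        rw [Nat.sub_zero, cJf_sat J (le_refl n), hJk]
        exact hkj
    | succ d ih =>
        apply le_min
        · exact le_trans (hcnt _) (cnt_mono_j (⇑u) _ hkj)
        · rcases Nat.lt_or_ge d n with h | h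
          · have h1 : n - d = (n - (d+1)) + 1 := by omega
            rw [h1] at ih
            have h2 := cJf_step J (n - (d+1))
            omega
          · have h1 : n - d = 0 := by omega
            have h2 : n - (d+1) = 0 := by omega
            have h3 := cJf_zero J
            rw [h1] at ih; rw [h2]
            omega
  rcases Nat.lt_or_ge i n with h | h
  · have := Haux (n - i)
    rwa [(by omega : n - (n - i) = i)] at this
  · rw [Mf_sat u J j h, cJf_sat J h, hJk]
    exact hkj

include hk hcnt hJk in
lemma Mf_forced {j : ℕ} (hkj : k ≤ j) (hjn : j ≤ n) {i : ℕ} (hei : eJ J i = 1) :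
    Mf u J j (i + 1) = Mf u J j i + 1 := by
  have hi : i < n := by
    by_contra h
    rw [eJ_eq_zero_of_ge J (by omega)] at hei
    omega
  have h1 : cJf J (i+1) ≤ Mf u J j (i+1) := Mf_lower u J k hk hcnt hJk hkj (i+1)
  have h2 := cJf_step J i
  have h3 : 1 ≤ Mf u J j (i+1) := by omega
  have h4 : Mf u J j (i+1) ≤ cnt n (⇑u) j (i+1) := Mf_le_cA u J hjn (by omega)
  have h5 : cnt n (⇑u) j (i+1) ≤ cnt n (⇑u) j i + 1 := cnt_step (⇑u) u.injective j i
  rw [Mf_rec u J j hi, hei]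
  omega

end WithHyp

lemma Mf_ub {j : ℕ} (hj : j ≤ n) {i i'' : ℕ} (h : i ≤ i'') (h2 : i'' ≤ n) :
    Mf u J j i ≤ cnt n (⇑u) j i'' - (cJf J i'' - cJf J i) := by
  suffices H : ∀ m i, i + m ≤ n →
      Mf u J j i ≤ cnt n (⇑u) j (i + m) - (cJf J (i + m) - cJf J i) by
    have := H (i'' - i) i (by omega)
    rwa [(by omega : i + (i'' - i) = i'')] at this
  intro m
  induction m with
  | zero =>
      intro i hi
      simpa using Mf_le_cA u J hj (by omega)
  | succ m ih =>
      intro i hi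
      have hi' : i < n := by omega
      have h1 : Mf u J j i ≤ Mf u J j (i+1) - eJ J i := by
        rw [Mf_rec u J j hi']; exact min_le_right _ _
      have h2' : Mf u J j (i+1) ≤ cnt n (⇑u) j (i+1+m) - (cJf J (i+1+m) - cJf J (i+1)) :=
        ih (i+1) (by omega)
      have h3 := cJf_step J i
      have h4 : cJf J (i+1) ≤ cJf J (i+1+m) := cJf_mono J (by omega)
      have h5 : i + 1 + m = i + (m + 1) := by omega
      rw [← h5]
      omega

lemma Mf_attained {j : ℕ} (hj : j ≤ n) {i : ℕ} (hi : i ≤ n) :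
    ∃ i'', i ≤ i'' ∧ i'' ≤ n ∧ Mf u J j i = cnt n (⇑u) j i'' - (cJf J i'' - cJf J i)
      ∧ cJf J i ≤ cJf J i'' := by
  obtain ⟨d, hd⟩ : ∃ d, i = n - d ∧ d ≤ n := ⟨n - i, by omega, by omega⟩
  obtain ⟨rfl, hdn⟩ := hd
  clear hi
  induction d with
  | zero =>
      refine ⟨n, by omega, le_refl n, ?_, le_refl _⟩
      rw [Nat.sub_zero, Mf_sat u J j (le_refl n), cnt_sat (⇑u) hj (le_refl n)]
      omega
  | succ d ih =>
      have hdn' : d ≤ n := by omega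
      rcases Nat.lt_or_ge d n with h | h
      · have hi : n - (d+1) < n := by omega
        rw [Mf_rec u J j hi]
        rcases le_total (cnt n (⇑u) j (n - (d+1))) (Mf u J j (n - (d+1) + 1) - eJ J (n - (d+1))) with hc | hc
        · refine ⟨n - (d+1), le_refl _, by omega, ?_, le_refl _⟩
          rw [min_eq_left hc]
          omega
        · obtain ⟨i'', h1, h2, h3, h4⟩ := ih hdn'
          have hsucc : n - (d+1) + 1 = n - d := by omega
          rw [min_eq_right hc, hsucc]
          have h5 := cJf_step J (n - (d+1))
          rw [hsucc] at h5
          exact ⟨i'', by omega, h2, by omega, by omega⟩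
      · -- d ≥ n, so n - (d+1) = n - d = 0
        obtain ⟨i'', h1, h2, h3, h4⟩ := ih hdn'
        have h0 : n - d = 0 := by omega
        have h0' : n - (d+1) = 0 := by omega
        rw [h0'] ; rw [h0] at h1 h3 h4
        exact ⟨i'', by omega, h2, h3, h4⟩

section WithHyp2

variable (k : ℕ) (hk : k ≤ n) (hcnt : ∀ i, cJf J i ≤ cnt n (⇑u) k i) (hJk : J.card = k)

include hk hcnt hJk in
lemma Mf_k_eq_cJ (i : ℕ) : Mf u J k i = cJf J i := by
  refine le_antisymm ?_ (Mf_lower u J k hk hcnt hJk (le_refl k) i)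
  suffices H : ∀ d, Maux u J k d ≤ cJf J (n - d) by
    rcases Nat.lt_or_ge i n with h | h
    · have := H (n - i)
      rwa [(by omega : n - (n - i) = i)] at this
    · rw [Mf_sat u J k h, cJf_sat J h, hJk]
  intro d
  induction d with
  | zero =>
      rw [Nat.sub_zero, cJf_sat J (le_refl n), hJk]
      exact le_refl k
  | succ d ih =>
      refine le_trans (min_le_right _ _) ?_
      rcases Nat.lt_or_ge d n with h | h
      · have h1 : n - d = (n - (d+1)) + 1 := by omega
        rw [h1] at ih
        have h2 := cJf_step J (n - (d+1))
        omega
      · have h1 : n - d = 0 := by omega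
        have h2 : n - (d+1) = 0 := by omega
        rw [h1] at ih; rw [h2]
        omega

include hk hcnt hJk in
lemma Mf_jump_mono {j : ℕ} (hkj : k ≤ j) (hj1 : j + 1 ≤ n) {i : ℕ}
    (hjump : Mf u J j (i + 1) = Mf u J j i + 1) :
    Mf u J (j + 1) (i + 1) = Mf u J (j + 1) i + 1 := by
  have hi : i < n := by
    by_contra h
    rw [Mf_sat u J j (by omega), Mf_sat u J j (by omega)] at hjump
    omega
  rcases Nat.eq_zero_or_pos (eJ J i) with hei | hei
  · -- optional jump case
    have hrec : Mf u J j i = min (cnt n (⇑u) j i) (Mf u J j (i+1) - eJ J i) := Mf_rec u J j hi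
    rw [hei, Nat.sub_zero] at hrec
    have hlt : cnt n (⇑u) j i + 1 ≤ Mf u J j (i+1) := by
      rcases le_total (cnt n (⇑u) j i) (Mf u J j (i+1)) with h | h
      · rcases Nat.eq_or_lt_of_le h with h' | h'
        · omega
        · omega
      · rw [min_eq_right h] at hrec; omega
    -- key: cA (j+1) i + 1 ≤ Mf (j+1) (i+1)
    obtain ⟨i'', h1, h2, h3, h4⟩ := Mf_attained u J (by omega : j + 1 ≤ n) (by omega : i + 1 ≤ n)
    have hub := Mf_ub u J (by omega : j ≤ n) h1 h2
    have hjn : j < n := by omega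
    have hkey : cnt n (⇑u) (j+1) i + 1 ≤ Mf u J (j+1) (i+1) := by
      rw [h3]
      have c1 := cnt_succ_j (⇑u) hjn i
      have c2 := cnt_succ_j (⇑u) hjn i''
      rw [c1, c2]
      split_ifs with hb1 hb2 hb2 <;> omega
    have hrec2 : Mf u J (j+1) i = min (cnt n (⇑u) (j+1) i) (Mf u J (j+1) (i+1) - eJ J i) :=
      Mf_rec u J (j+1) hi
    rw [hei, Nat.sub_zero] at hrec2
    have hstep := Mf_step u J (by omega : j + 1 ≤ n) i
    omega
  · have hei1 : eJ J i = 1 := by have := eJ_le_one J i; omega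
    exact Mf_forced u J k hk hcnt hJk (by omega) (by omega) hei1

end WithHyp2

end Stmt6Aux
namespace Stmt6Aux

variable {n : ℕ} (u : Equiv.Perm (Fin n)) (J : Finset (Fin n)) (k : ℕ)

/-- Combined count function: prefix counts of the minimal element. -/
def Cf (j i : ℕ) : ℕ := if j ≤ k then gf u J j i else Mf u J j i

section CLemmas

variable (hk : k ≤ n) (hcnt : ∀ i, cJf J i ≤ cnt n (⇑u) k i) (hJk : J.card = k)

include hk hcnt hJk

lemma Cf_zero_j (i : ℕ) : Cf u J k 0 i = 0 := by
  unfold Cf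
  rw [if_pos (Nat.zero_le k)]
  have h1 := gf_le_cA u J 0 i
  have h2 := cnt_le_j (⇑u) 0 i
  omega

lemma Cf_zero {j : ℕ} (hj : j ≤ n) : Cf u J k j 0 = 0 := by
  unfold Cf
  split
  · rfl
  · exact Mf_zero u J hj

lemma Cf_top {j : ℕ} (hj : j ≤ n) {i : ℕ} (hi : n ≤ i) : Cf u J k j i = j := by
  by_cases h : j ≤ k
  · rw [Cf, if_pos h]; exact gf_top u J k hk hcnt hJk h hi
  · rw [Cf, if_neg h]; exact Mf_sat u J j hi

lemma Cf_le_cA {j : ℕ} (hj : j ≤ n) (i : ℕ) : Cf u J k j i ≤ cnt n (⇑u) j i := by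
  unfold Cf
  split
  · exact gf_le_cA u J j i
  · rcases le_or_gt i n with h | h
    · exact Mf_le_cA u J hj h
    · rw [Mf_sat u J j (by omega), cnt_sat (⇑u) hj (by omega)]

lemma Cf_mono_i (j i : ℕ) : Cf u J k j i ≤ Cf u J k j (i + 1) := by
  unfold Cf
  split
  · exact gf_mono u J j i
  · exact Mf_mono u J j i

lemma Cf_step {j : ℕ} (hj : j ≤ n) (i : ℕ) : Cf u J k j (i + 1) ≤ Cf u J k j i + 1 := by
  unfold Cf
  split
  · have h1 := gf_step u J j i
    have h2 := eJ_le_one J i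
    omega
  · exact Mf_step u J hj i

lemma Cf_mono_j {j j' : ℕ} (h : j ≤ j') (hj' : j' ≤ n) (i : ℕ) :
    Cf u J k j i ≤ Cf u J k j' i := by
  by_cases h1 : j ≤ k <;> by_cases h2 : j' ≤ k
  · rw [Cf, Cf, if_pos h1, if_pos h2]; exact gf_mono_j u J h i
  · rw [Cf, Cf, if_pos h1, if_neg h2]
    calc gf u J j i ≤ gf u J k i := gf_mono_j u J h1 i
      _ = cJf J i := gf_k_eq_cJ u J k hk hcnt hJk i
      _ ≤ Mf u J j' i := Mf_lower u J k hk hcnt hJk (by omega) i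
  · omega
  · rw [Cf, Cf, if_neg h1, if_neg h2]; exact Mf_mono_j u J h i

lemma Cf_jump_mono {j : ℕ} (hj1 : j + 1 ≤ n) {i : ℕ}
    (hjump : Cf u J k j (i + 1) = Cf u J k j i + 1) :
    Cf u J k (j + 1) (i + 1) = Cf u J k (j + 1) i + 1 := by
  rcases le_or_gt (j + 1) k with h1 | h1
  · have hj2 : j ≤ k := by omega
    simp only [Cf, if_pos h1, if_pos hj2] at hjump ⊢
    exact gf_jump_mono u J k hk h1 hjump
  · rcases le_or_gt j k with h2 | h2
    · have hjk : j = k := by omega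
      subst hjk
      simp only [Cf, if_pos (le_refl j), if_neg (show ¬ j + 1 ≤ j by omega)] at hjump ⊢
      simp only [gf_k_eq_cJ u J j hk hcnt hJk] at hjump
      have hei : eJ J i = 1 := by
        have := cJf_step J i
        omega
      exact Mf_forced u J j hk hcnt hJk (by omega) (by omega) hei
    · simp only [Cf, if_neg (show ¬ j ≤ k by omega), if_neg (show ¬ j + 1 ≤ k by omega)]
        at hjump ⊢
      exact Mf_jump_mono u J k hk hcnt hJk (by omega) hj1 hjump

lemma Cf_jump_chain {j j' : ℕ} (h : j ≤ j') {i : ℕ}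
    (hjump : Cf u J k j (i + 1) = Cf u J k j i + 1) :
    j' ≤ n → Cf u J k j' (i + 1) = Cf u J k j' i + 1 := by
  induction j', h using Nat.le_induction with
  | base => exact fun _ => hjump
  | succ j'' hjj' ih =>
      intro hj'
      exact Cf_jump_mono u J k hk hcnt hJk hj' (ih (by omega))

lemma Cf_diff_mono {j : ℕ} (hj1 : j + 1 ≤ n) {i i' : ℕ} (h : i ≤ i') :
    Cf u J k (j + 1) i - Cf u J k j i ≤ Cf u J k (j + 1) i' - Cf u J k j i' := by
  induction i', h using Nat.le_induction with
  | base => exact le_refl _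
  | succ i' hii' ih =>
      have hmj := Cf_mono_j u J k hk hcnt hJk (show j ≤ j + 1 by omega) hj1 i'
      have hmj' := Cf_mono_j u J k hk hcnt hJk (show j ≤ j + 1 by omega) hj1 (i' + 1)
      have hs1 := Cf_step u J k hk hcnt hJk (by omega : j ≤ n) i'
      have hs2 := Cf_step u J k hk hcnt hJk hj1 i'
      have hm1 := Cf_mono_i u J k hk hcnt hJk j i'
      have hm2 := Cf_mono_i u J k hk hcnt hJk (j+1) i'
      rcases Nat.lt_or_ge (Cf u J k j i') (Cf u J k j (i' + 1)) with hc | hc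
      · have hjump : Cf u J k j (i' + 1) = Cf u J k j i' + 1 := by omega
        have := Cf_jump_mono u J k hk hcnt hJk hj1 hjump
        omega
      · omega

lemma Cf_diff_le_one {j : ℕ} (hj1 : j + 1 ≤ n) (i : ℕ) :
    Cf u J k (j + 1) i - Cf u J k j i ≤ 1 := by
  rcases le_or_gt i n with h | h
  · have := Cf_diff_mono u J k hk hcnt hJk hj1 h
    rw [Cf_top u J k hk hcnt hJk (show j ≤ n by omega) (le_refl n),
      Cf_top u J k hk hcnt hJk hj1 (le_refl n)] at this
    omega
  · rw [Cf_top u J k hk hcnt hJk (show j ≤ n by omega) (show n ≤ i by omega),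
      Cf_top u J k hk hcnt hJk hj1 (show n ≤ i by omega)]
    omega

end CLemmas

/-- the value of the minimal permutation at position `p`. -/
noncomputable def xval (p : ℕ) : ℕ :=
  sInf {i : ℕ | Cf u J k (p + 1) (i + 1) = Cf u J k p (i + 1) + 1}

section XLemmas

variable (hk : k ≤ n) (hcnt : ∀ i, cJf J i ≤ cnt n (⇑u) k i) (hJk : J.card = k)

include hk hcnt hJk

lemma xval_nonempty {p : ℕ} (hp : p < n) :
    ((n : ℕ) - 1) ∈ {i : ℕ | Cf u J k (p + 1) (i + 1) = Cf u J k p (i + 1) + 1} := by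
  have hn : (n : ℕ) - 1 + 1 = n := by omega
  simp only [Set.mem_setOf_eq, hn]
  rw [Cf_top u J k hk hcnt hJk (by omega) (le_refl n),
    Cf_top u J k hk hcnt hJk (by omega) (le_refl n)]

lemma xval_lt {p : ℕ} (hp : p < n) : xval u J k p < n := by
  have h : xval u J k p ≤ n - 1 := Nat.sInf_le (xval_nonempty u J k hk hcnt hJk hp)
  omega

lemma xval_spec {p : ℕ} (hp : p < n) :
    Cf u J k (p + 1) (xval u J k p + 1) = Cf u J k p (xval u J k p + 1) + 1 := by
  have h : sInf {i : ℕ | Cf u J k (p + 1) (i + 1) = Cf u J k p (i + 1) + 1}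
      ∈ {i : ℕ | Cf u J k (p + 1) (i + 1) = Cf u J k p (i + 1) + 1} :=
    Nat.sInf_mem ⟨_, xval_nonempty u J k hk hcnt hJk hp⟩
  exact h

lemma xval_min {p : ℕ} (hp : p < n) {i : ℕ} (hi : i < xval u J k p) :
    Cf u J k (p + 1) (i + 1) ≠ Cf u J k p (i + 1) + 1 := by
  have h : i < sInf {i : ℕ | Cf u J k (p + 1) (i + 1) = Cf u J k p (i + 1) + 1} := hi
  have h2 : i ∉ {i : ℕ | Cf u J k (p + 1) (i + 1) = Cf u J k p (i + 1) + 1} :=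
    Nat.notMem_of_lt_sInf h
  exact fun hc => h2 hc

/-- below the jump, the two levels agree -/
lemma xval_below {p : ℕ} (hp : p < n) {i : ℕ} (hi : i ≤ xval u J k p) :
    Cf u J k (p + 1) i = Cf u J k p i := by
  have hmono := Cf_mono_j u J k hk hcnt hJk (show p ≤ p + 1 by omega) (by omega) i
  cases i with
  | zero =>
      rw [Cf_zero u J k hk hcnt hJk (by omega : p + 1 ≤ n), Cf_zero u J k hk hcnt hJk (by omega : p ≤ n)]
  | succ i =>
      have hne := xval_min u J k hk hcnt hJk (p := p) hp (i := i) (by omega)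
      have hle := Cf_diff_le_one u J k hk hcnt hJk (by omega : p + 1 ≤ n) (i+1)
      have hmono2 := Cf_mono_j u J k hk hcnt hJk (show p ≤ p + 1 by omega) (by omega) (i+1)
      omega

lemma xval_above {p : ℕ} (hp : p < n) {i : ℕ} (hi : xval u J k p < i) :
    Cf u J k (p + 1) i = Cf u J k p i + 1 := by
  have hd := Cf_diff_mono u J k hk hcnt hJk (by omega : p + 1 ≤ n)
    (show xval u J k p + 1 ≤ i by omega)
  have hspec := xval_spec u J k hk hcnt hJk hp
  have hb := xval_below u J k hk hcnt hJk hp (le_refl (xval u J k p))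
  have hle := Cf_diff_le_one u J k hk hcnt hJk (by omega : p + 1 ≤ n) i
  have hmono := Cf_mono_j u J k hk hcnt hJk (show p ≤ p + 1 by omega) (by omega) i
  omega

lemma xval_count {p : ℕ} (hp : p < n) (i : ℕ) :
    Cf u J k (p + 1) i = Cf u J k p i + (if xval u J k p < i then 1 else 0) := by
  by_cases h : xval u J k p < i
  · rw [if_pos h]; exact xval_above u J k hk hcnt hJk hp h
  · rw [if_neg h, Nat.add_zero]; exact xval_below u J k hk hcnt hJk hp (by omega)

/-- the level `p+1` function genuinely jumps at `xval p`. -/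
lemma xval_jump {p : ℕ} (hp : p < n) :
    Cf u J k (p + 1) (xval u J k p + 1) = Cf u J k (p + 1) (xval u J k p) + 1 := by
  have h1 := xval_spec u J k hk hcnt hJk hp
  have h2 := xval_below u J k hk hcnt hJk hp (le_refl (xval u J k p))
  have h3 := Cf_step u J k hk hcnt hJk (by omega : p ≤ n) (xval u J k p)
  have h4 := Cf_mono_i u J k hk hcnt hJk p (xval u J k p)
  have h5 := Cf_step u J k hk hcnt hJk (show p + 1 ≤ n by omega) (xval u J k p)
  omega

lemma xval_inj {p q : ℕ} (hpq : p < q) (hq : q < n) : xval u J k p ≠ xval u J k q := by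
  intro heq
  set t := xval u J k p with ht
  -- level p+1 jumps at t, so level q jumps at t by the chain
  have h1 : Cf u J k (p+1) (t+1) = Cf u J k (p+1) t + 1 :=
    xval_jump u J k hk hcnt hJk (by omega)
  have h2 : Cf u J k q (t+1) = Cf u J k q t + 1 :=
    Cf_jump_chain u J k hk hcnt hJk (by omega : p + 1 ≤ q) h1 (by omega)
  -- but level q does not jump at t = xval q
  have h3 : Cf u J k (q+1) (t+1) = Cf u J k q (t+1) + 1 := by
    rw [heq]; exact xval_spec u J k hk hcnt hJk hq
  have h4 : Cf u J k (q+1) t = Cf u J k q t := by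
    rw [heq]; exact xval_below u J k hk hcnt hJk hq (by rw [← heq])
  have h5 := Cf_step u J k hk hcnt hJk (by omega : q + 1 ≤ n) t
  omega

lemma xval_mem {p : ℕ} (hpk : p + 1 ≤ k) (hp : p < n) :
    eJ J (xval u J k p) = 1 := by
  have h1 := xval_jump u J k hk hcnt hJk hp
  unfold Cf at h1
  rw [if_pos hpk, if_pos hpk] at h1
  have h2 := gf_step u J (p+1) (xval u J k p)
  have h3 := eJ_le_one J (xval u J k p)
  omega

end XLemmas

/-- the permutation function -/
noncomputable def xfun (hk : k ≤ n) (hcnt : ∀ i, cJf J i ≤ cnt n (⇑u) k i) (hJk : J.card = k) :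
    Fin n → Fin n := fun a =>
  ⟨xval u J k (a : ℕ), xval_lt u J k hk hcnt hJk a.isLt⟩

lemma xfun_injective (hk : k ≤ n) (hcnt : ∀ i, cJf J i ≤ cnt n (⇑u) k i) (hJk : J.card = k) :
    Function.Injective (xfun u J k hk hcnt hJk) := by
  intro a b hab
  by_contra hne
  have hv : xval u J k (a : ℕ) = xval u J k (b : ℕ) := congrArg Fin.val hab
  have hne' : (a : ℕ) ≠ (b : ℕ) := fun h => hne (Fin.ext h)
  rcases Nat.lt_or_ge (a : ℕ) (b : ℕ) with h | h
  · exact xval_inj u J k hk hcnt hJk h b.isLt hv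
  · exact xval_inj u J k hk hcnt hJk (by omega) a.isLt hv.symm

lemma xfun_cnt (hk : k ≤ n) (hcnt : ∀ i, cJf J i ≤ cnt n (⇑u) k i) (hJk : J.card = k)
    {j : ℕ} (hj : j ≤ n) (i : ℕ) :
    cnt n (xfun u J k hk hcnt hJk) j i = Cf u J k j i := by
  induction j with
  | zero => rw [cnt_zero_j, Cf_zero_j u J k hk hcnt hJk]
  | succ j ih =>
      have hjn : j < n := by omega
      rw [cnt_succ_j (xfun u J k hk hcnt hJk) hjn i, ih (by omega)]
      have : ((xfun u J k hk hcnt hJk ⟨j, hjn⟩ : Fin n) : ℕ) = xval u J k j := rfl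
      rw [this]
      exact (xval_count u J k hk hcnt hJk hjn i).symm

end Stmt6Aux
namespace Stmt6Aux

variable {n : ℕ}

lemma iso_filter_card {S : Finset (Fin n)} {k : ℕ} (h : S.card = k) (P : Fin n → Prop)
    [DecidablePred P] :
    (S.filter P).card
      = (Finset.univ.filter fun a : Fin k => P ((S.orderIsoOfFin h a) : Fin n)).card := by
  symm
  apply Finset.card_bij (fun (a : Fin k) _ => ((S.orderIsoOfFin h a : { x // x ∈ S }) : Fin n))
  · intro a ha
    simp only [Finset.mem_filter, Finset.mem_univ, true_and] at *
    exact ⟨(S.orderIsoOfFin h a).2, ha⟩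
  · intro a _ b _ hab
    have := Subtype.coe_injective hab
    exact (S.orderIsoOfFin h).injective this
  · intro t ht
    simp only [Finset.mem_filter] at ht
    refine ⟨(S.orderIsoOfFin h).symm ⟨t, ht.1⟩, ?_, ?_⟩
    · simp only [Finset.mem_filter, Finset.mem_univ, true_and, OrderIso.apply_symm_apply]
      exact ht.2
    · rw [OrderIso.apply_symm_apply]

lemma cnt_eq_cJf_image (v : Equiv.Perm (Fin n)) (j i : ℕ) :
    cnt n (⇑v) j i = cJf ((Finset.univ.filter fun a : Fin n => (a : ℕ) < j).image v) i := by
  unfold cJf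
  rw [Finset.filter_image, Finset.card_image_of_injective _ v.injective, Finset.filter_filter]
  rfl

lemma perm_eq_of_cnt_eq (x y : Equiv.Perm (Fin n))
    (h : ∀ j i : ℕ, cnt n (⇑x) j i = cnt n (⇑y) j i) : x = y := by
  apply Equiv.ext
  intro a
  have key : ∀ i, ((x a : ℕ) < i ↔ (y a : ℕ) < i) := by
    intro i
    have h1 := cnt_succ_j (⇑x) a.isLt i
    have h2 := cnt_succ_j (⇑y) a.isLt i
    simp only [Fin.eta] at h1 h2
    have e1 := h ((a : ℕ) + 1) i
    have e2 := h (a : ℕ) i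
    constructor
    · intro hx
      by_contra hy
      rw [if_pos hx] at h1; rw [if_neg hy] at h2; omega
    · intro hy
      by_contra hx
      rw [if_pos hy] at h2; rw [if_neg hx] at h1; omega
  have k1 := key ((x a : ℕ) + 1)
  have k2 := key ((y a : ℕ) + 1)
  apply Fin.ext
  omega

section YSide

variable (u : Equiv.Perm (Fin n)) (J : Finset (Fin n)) (k : ℕ) (y : Equiv.Perm (Fin n))
variable (hyJ : (Finset.univ.filter fun a : Fin n => (a : ℕ) < k).image y = J)

include hyJ in
lemma y_mem {a : Fin n} (ha : (a : ℕ) < k) : y a ∈ J := by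
  rw [← hyJ]
  exact Finset.mem_image_of_mem _ (Finset.mem_filter.mpr ⟨Finset.mem_univ _, ha⟩)

include hyJ in
lemma y_surj {t : Fin n} (ht : t ∈ J) : ∃ a : Fin n, (a : ℕ) < k ∧ y a = t := by
  rw [← hyJ] at ht
  rw [Finset.mem_image] at ht
  obtain ⟨a, ha, rfl⟩ := ht
  exact ⟨a, (Finset.mem_filter.mp ha).2, rfl⟩

include hyJ in
lemma Ycnt_step {j' : ℕ} (hj' : j' ≤ k) (i : ℕ) :
    cnt n (⇑y) j' (i + 1) ≤ cnt n (⇑y) j' i + eJ J i := by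
  rcases Nat.eq_zero_or_pos (eJ J i) with hei | hei
  · rw [hei]
    have hle : cnt n (⇑y) j' (i + 1) ≤ cnt n (⇑y) j' i := by
      apply Finset.card_le_card
      intro a ha
      simp only [Finset.mem_filter, Finset.mem_univ, true_and] at *
      refine ⟨ha.1, ?_⟩
      rcases Nat.lt_succ_iff_lt_or_eq.mp ha.2 with h | h
      · exact h
      · exfalso
        have hmem : y a ∈ J := y_mem J k y hyJ (by omega)
        have : i ∈ J.image Fin.val := Finset.mem_image.mpr ⟨y a, hmem, h⟩
        unfold eJ at hei
        rw [if_pos this] at hei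
        omega
    omega
  · have := cnt_step (⇑y) y.injective j' i
    omega

include hyJ in
lemma Ycnt_forced {j' : ℕ} (hj' : k ≤ j') {i : ℕ} (hei : eJ J i = 1) :
    cnt n (⇑y) j' i + 1 ≤ cnt n (⇑y) j' (i + 1) := by
  have hmem : i ∈ J.image Fin.val := by
    unfold eJ at hei
    by_contra h
    rw [if_neg h] at hei
    omega
  rw [Finset.mem_image] at hmem
  obtain ⟨t, htJ, htv⟩ := hmem
  obtain ⟨a, hak, hya⟩ := y_surj J k y hyJ htJ
  have hss : (Finset.univ.filter fun b : Fin n => (b : ℕ) < j' ∧ ((y b : ℕ)) < i)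
      ⊂ (Finset.univ.filter fun b : Fin n => (b : ℕ) < j' ∧ ((y b : ℕ)) < i + 1) := by
    constructor
    · intro b hb
      simp only [Finset.mem_filter, Finset.mem_univ, true_and] at *
      exact ⟨hb.1, by omega⟩
    · intro hsub
      have ha2 : a ∈ (Finset.univ.filter fun b : Fin n => (b : ℕ) < j' ∧ ((y b : ℕ)) < i + 1) := by
        simp only [Finset.mem_filter, Finset.mem_univ, true_and]
        constructor
        · omega
        · rw [hya, htv]; omega
      have := hsub ha2
      simp only [Finset.mem_filter, Finset.mem_univ, true_and] at this
      rw [hya, htv] at this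
      omega
  exact Finset.card_lt_card hss

variable (hk : k ≤ n) (hcnt : ∀ i, cJf J i ≤ cnt n (⇑u) k i) (hJk : J.card = k)
variable (hyB : ∀ i j : ℕ, cnt n (⇑y) j i ≤ cnt n (⇑u) j i)

include hyJ hk hcnt hJk hyB in
lemma y_le_C {j : ℕ} (hj : j ≤ n) (i : ℕ) : cnt n (⇑y) j i ≤ Cf u J k j i := by
  by_cases hjk : j ≤ k
  · unfold Cf
    rw [if_pos hjk]
    induction i with
    | zero => rw [cnt_zero]; exact Nat.zero_le _
    | succ i ih =>
        have h1 := Ycnt_step J k y hyJ hjk i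
        have h2 := hyB (i+1) j
        have h3 : gf u J j (i+1) = min (gf u J j i + eJ J i) (cnt n (⇑u) j (i+1)) := rfl
        omega
  · unfold Cf
    rw [if_neg hjk]
    have key : ∀ d, cnt n (⇑y) j (n - d) ≤ Mf u J j (n - d) := by
      intro d
      induction d with
      | zero =>
          rw [Nat.sub_zero, cnt_sat (⇑y) hj (le_refl n), Mf_sat u J j (le_refl n)]
      | succ d ih =>
          rcases Nat.lt_or_ge d n with h | h
          · have hi : n - (d+1) < n := by omega
            have hsucc : n - (d+1) + 1 = n - d := by omega
            rw [Mf_rec u J j hi]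
            apply le_min
            · exact hyB (n - (d+1)) j
            · rcases Nat.eq_zero_or_pos (eJ J (n - (d+1))) with hei | hei
              · rw [hei, Nat.sub_zero]
                calc cnt n (⇑y) j (n - (d+1)) ≤ cnt n (⇑y) j (n - (d+1) + 1) :=
                      cnt_mono_i (⇑y) j (Nat.le_succ _)
                  _ = cnt n (⇑y) j (n - d) := by rw [hsucc]
                  _ ≤ Mf u J j (n - d) := ih
                  _ = Mf u J j (n - (d+1) + 1) := by rw [hsucc]
              · have hei1 : eJ J (n - (d+1)) = 1 := by
                  have := eJ_le_one J (n - (d+1))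
                  omega
                have hf := Ycnt_forced J k y hyJ (by omega : k ≤ j) hei1
                rw [hsucc] at hf
                rw [hei1, hsucc]
                omega
          · have heq : n - (d+1) = n - d := by omega
            rw [heq]
            exact ih
    rcases le_or_gt i n with h | h
    · have := key (n - i)
      rwa [(by omega : n - (n - i) = i)] at this
    · rw [cnt_sat (⇑y) hj (by omega), Mf_sat u J j (by omega)]

end YSide

section XImage

variable (u : Equiv.Perm (Fin n)) (J : Finset (Fin n)) (k : ℕ)
variable (hk : k ≤ n) (hcnt : ∀ i, cJf J i ≤ cnt n (⇑u) k i) (hJk : J.card = k)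

include hk hcnt hJk in
lemma ximage :
    (Finset.univ.filter fun a : Fin n => (a : ℕ) < k).image (xfun u J k hk hcnt hJk) = J := by
  have hsub : (Finset.univ.filter fun a : Fin n => (a : ℕ) < k).image (xfun u J k hk hcnt hJk)
      ⊆ J := by
    intro t ht
    rw [Finset.mem_image] at ht
    obtain ⟨a, ha, rfl⟩ := ht
    have hak : (a : ℕ) < k := (Finset.mem_filter.mp ha).2
    have he : eJ J (xval u J k (a : ℕ)) = 1 :=
      xval_mem u J k hk hcnt hJk (by omega) a.isLt
    have hmem : xval u J k (a : ℕ) ∈ J.image Fin.val := by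
      unfold eJ at he
      by_contra h
      rw [if_neg h] at he
      omega
    rw [Finset.mem_image] at hmem
    obtain ⟨t', ht', htv⟩ := hmem
    have : xfun u J k hk hcnt hJk a = t' := Fin.ext htv.symm
    rw [this]
    exact ht'
  apply Finset.eq_of_subset_of_card_le hsub
  rw [Finset.card_image_of_injective _ (xfun_injective u J k hk hcnt hJk), posCard,
    Nat.min_eq_left hk, hJk]

end XImage

end Stmt6Aux
open Stmt6Aux in
/-- Let `u ∈ S_n` and `J` a `k`-element subset of `{1,…,n}` with `u[k] ⪯ J`
componentwise (where `u[k]` is the image of the first `k` elements under `u`).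
Then the set `{x : u ≤ x in Bruhat order, x[k] = J}` is nonempty and has a unique
minimal element with respect to Bruhat order (a least element). -/
theorem stmt6 (n k : ℕ) (u : Equiv.Perm (Fin n)) (J : Finset (Fin n)) (hJ : J.card = k)
    (hle : ∀ (hu : ((Finset.univ.filter fun a : Fin n => (a : ℕ) < k).image u).card = k)
        (a : Fin k),
      (((Finset.univ.filter fun x : Fin n => (x : ℕ) < k).image u).orderIsoOfFin hu a).1 ≤
        (J.orderIsoOfFin hJ a).1) :
    ∃! x : Equiv.Perm (Fin n),
      (BruhatLE u x ∧ (Finset.univ.filter fun a : Fin n => (a : ℕ) < k).image x = J) ∧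
        ∀ y : Equiv.Perm (Fin n),
          (BruhatLE u y ∧ (Finset.univ.filter fun a : Fin n => (a : ℕ) < k).image y = J) →
            BruhatLE x y := by
  classical
  have hk : k ≤ n := by
    have h1 : J.card ≤ n := le_trans (Finset.card_le_univ J) (le_of_eq (by simp))
    omega
  have hu : ((Finset.univ.filter fun a : Fin n => (a : ℕ) < k).image u).card = k := by
    rw [Finset.card_image_of_injective _ u.injective, posCard, Nat.min_eq_left hk]
  have hcomp := hle hu
  have hcnt : ∀ i, cJf J i ≤ cnt n (⇑u) k i := by
    intro i
    rw [cnt_eq_cJf_image u k i]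
    unfold cJf
    rw [iso_filter_card hJ (fun t => (t : ℕ) < i), iso_filter_card hu (fun t => (t : ℕ) < i)]
    apply Finset.card_le_card
    intro a ha
    simp only [Finset.mem_filter, Finset.mem_univ, true_and] at *
    have h2 := hcomp a
    have h3 := Fin.le_def.mp h2
    omega
  set f := xfun u J k hk hcnt hJ with hf
  have hbij : Function.Bijective f :=
    Finite.injective_iff_bijective.mp (xfun_injective u J k hk hcnt hJ)
  set x : Equiv.Perm (Fin n) := Equiv.ofBijective f hbij with hx
  have hxf : ⇑x = f := rfl
  have hxcnt : ∀ j, j ≤ n → ∀ i, cnt n (⇑x) j i = Cf u J k j i := by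
    intro j hj i
    rw [hxf]
    exact xfun_cnt u J k hk hcnt hJ hj i
  have hP1 : BruhatLE u x := by
    intro i j
    show cnt n (⇑x) j i ≤ cnt n (⇑u) j i
    rw [cnt_min (⇑x) j i, cnt_min (⇑u) j i, hxcnt (min j n) (min_le_right j n) i]
    exact Cf_le_cA u J k hk hcnt hJ (min_le_right j n) i
  have hP2 : (Finset.univ.filter fun a : Fin n => (a : ℕ) < k).image x = J := by
    rw [show ⇑x = f from rfl, hf]
    exact ximage u J k hk hcnt hJ
  have hP3 : ∀ y : Equiv.Perm (Fin n),
      (BruhatLE u y ∧ (Finset.univ.filter fun a : Fin n => (a : ℕ) < k).image y = J) →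
        BruhatLE x y := by
    rintro y ⟨hyB, hyJ⟩ i j
    show cnt n (⇑y) j i ≤ cnt n (⇑x) j i
    rw [cnt_min (⇑y) j i, cnt_min (⇑x) j i, hxcnt (min j n) (min_le_right j n) i]
    exact y_le_C u J k y hyJ hk hcnt hJ (fun i' j' => hyB i' j') (min_le_right j n) i
  refine ⟨x, ⟨⟨hP1, hP2⟩, hP3⟩, ?_⟩
  rintro y ⟨⟨hyB, hyJ⟩, hymin⟩
  have h1 : BruhatLE x y := hP3 y ⟨hyB, hyJ⟩
  have h2 : BruhatLE y x := hymin x ⟨hP1, hP2⟩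
  apply perm_eq_of_cnt_eq
  intro j i
  exact le_antisymm (h1 i j) (h2 i j)
end

section
/- Let A be a commutative ring of prime characteristic p with a Frobenius splitting φ : A → A (additive, φ(x^p y) = x φ(y), φ(1) = 1). Suppose I and J are ideals of A that are compatibly split, i.e., φ(I) ⊆ I and φ(J) ⊆ J. Then the ideal I + J is also compatibly split, and I + J is a radical ideal. -/
/-!
Splitting `x ^ p * 1` gives `φ (x ^ p) = x`, so an ideal stable under `φ` contains `x` as soon as
it contains `x ^ p`; since `p > 1` this already makes it radical. Stability of `I + J` is
additivity of `φ`.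
-/

theorem apply_pow_eq_of_splitting {A : Type*} [Monoid A] {p : ℕ} {φ : A → A}
    (hsplit : ∀ x y : A, φ (x ^ p * y) = x * φ y) (hone : φ 1 = 1) (x : A) :
    φ (x ^ p) = x := by
  simpa only [mul_one, hone] using hsplit x 1

theorem Ideal.map_mem_sup_of_map_mem {A : Type*} [Semiring A] {φ : A → A}
    (hadd : ∀ x y : A, φ (x + y) = φ x + φ y) {I J : Ideal A}
    (hI : ∀ x ∈ I, φ x ∈ I) (hJ : ∀ x ∈ J, φ x ∈ J) :
    ∀ x ∈ I ⊔ J, φ x ∈ I ⊔ J := by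
  intro x hx
  obtain ⟨a, ha, b, hb, rfl⟩ := Submodule.mem_sup.mp hx
  rw [hadd]
  exact Submodule.add_mem_sup (hI a ha) (hJ b hb)

theorem Ideal.isRadical_of_map_mem_of_splitting {A : Type*} [CommSemiring A] {p : ℕ}
    (hp : 1 < p) {φ : A → A} (hsplit : ∀ x y : A, φ (x ^ p * y) = x * φ y) (hone : φ 1 = 1)
    {K : Ideal A} (hK : ∀ x ∈ K, φ x ∈ K) : K.IsRadical :=
  (Ideal.isRadical_iff_pow_one_lt p hp).2 fun x hx ↦
    apply_pow_eq_of_splitting hsplit hone x ▸ hK _ hx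

theorem stmt11_general (p : ℕ) (hp : p.Prime) (A : Type*) [CommRing A]
    (φ : A → A)
    (hadd : ∀ x y : A, φ (x + y) = φ x + φ y)
    (hsplit : ∀ x y : A, φ (x ^ p * y) = x * φ y)
    (hone : φ 1 = 1)
    (I J : Ideal A)
    (hI : ∀ x ∈ I, φ x ∈ I) (hJ : ∀ x ∈ J, φ x ∈ J) :
    (∀ x ∈ I + J, φ x ∈ I + J) ∧ (I + J).radical = I + J := by
  have hK : ∀ x ∈ I + J, φ x ∈ I + J := Ideal.map_mem_sup_of_map_mem hadd hI hJ
  exact ⟨hK, (Ideal.isRadical_of_map_mem_of_splitting hp.one_lt hsplit hone hK).radical⟩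

/-- If `φ` is a Frobenius splitting of a commutative ring `A` of prime characteristic
`p`, and ideals `I`, `J` are compatibly split (`φ(I) ⊆ I`, `φ(J) ⊆ J`), then `I + J`
is compatibly split and is a radical ideal. -/
theorem stmt11 (p : ℕ) (hp : p.Prime) (A : Type*) [CommRing A] [CharP A p]
    (φ : A → A)
    (hadd : ∀ x y : A, φ (x + y) = φ x + φ y)
    (hsplit : ∀ x y : A, φ (x ^ p * y) = x * φ y)
    (hone : φ 1 = 1)
    (I J : Ideal A)
    (hI : ∀ x ∈ I, φ x ∈ I) (hJ : ∀ x ∈ J, φ x ∈ J) :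
    (∀ x ∈ I + J, φ x ∈ I + J) ∧ (I + J).radical = I + J :=
  stmt11_general p hp A φ hadd hsplit hone I J hI hJ
end

section
/- Let f ∈ S̃_n be a bounded affine permutation (a bijection of ℤ with f(i+n) = f(i)+n and i ≤ f(i) ≤ i+n for all i) of displacement k. For each i ∈ ℤ define Ĩ_i = { j ∈ {i, i+1, ..., i+n−1} : f^{-1}(j) < i }. Then (a) |Ĩ_i| = k for every i, and (b) Ĩ_i \ {i} ⊆ Ĩ_{i+1} for every i. -/
/-! The size of `Ĩ_i` does not depend on `i`: passing from `i` to `i + 1` trades `i` for `f i`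
when `f i ≠ i` and changes nothing otherwise. Through `j ↦ f⁻¹ j`, `|Ĩ_i|` counts the
`m < i ≤ f m`, i.e. the `d ∈ [1, n]` with `d ≤ f (i - d) - (i - d)`. Summing over `i ∈ [1, n]` and
using that the displacement `m ↦ f m - m` is `n`-periodic turns this double count into
`∑_{m=1}^n (f m - m) = n k`. -/

open Finset

theorem Function.Periodic.sum_Ico_eq_sum_Ico {M : Type*} [AddCommMonoid M] {φ : ℤ → M} {n : ℕ}
    (hφ : Function.Periodic φ n) (a b : ℤ) :
    ∑ j ∈ Ico a (a + n), φ j = ∑ j ∈ Ico b (b + n), φ j := by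
  rcases Nat.eq_zero_or_pos n with rfl | hn
  · simp
  have shift_one : ∀ a : ℤ, ∑ j ∈ Ico (a + 1) (a + 1 + n), φ j = ∑ j ∈ Ico a (a + n), φ j := by
    intro a
    rw [← insert_Ico_add_one_left_eq_Ico (show a < a + n by omega),
      show a + 1 + n = a + n + 1 by ring,
      ← insert_Ico_right_eq_Ico_add_one (show a + 1 ≤ a + n by omega),
      sum_insert (by simp), sum_insert (by simp), hφ a, add_comm]
  have eq_at_zero : ∀ a : ℤ, ∑ j ∈ Ico a (a + n), φ j = ∑ j ∈ Ico (0 : ℤ) (0 + n), φ j := by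
    intro a
    induction a using Int.induction_on with
    | zero => rfl
    | succ a ih => rw [shift_one, ih]
    | pred a ih => rw [← ih, ← shift_one, sub_add_cancel]
  rw [eq_at_zero a, eq_at_zero b]

theorem Function.Periodic.sum_Icc_one_comp_add {M : Type*} [AddCommMonoid M] {φ : ℤ → M} {n : ℕ}
    (hφ : Function.Periodic φ n) (c : ℤ) :
    ∑ j ∈ Icc 1 (n : ℤ), φ (j + c) = ∑ j ∈ Icc 1 (n : ℤ), φ j := by
  rw [← Ico_add_one_right_eq_Icc, sum_Ico_add', add_comm (n : ℤ), add_right_comm,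
    hφ.sum_Ico_eq_sum_Ico (1 + c) 1]

theorem card_Icc_one_filter_le {n x : ℤ} (h₀ : 0 ≤ x) (hx : x ≤ n) :
    (((Icc 1 n).filter fun d => d ≤ x).card : ℤ) = x := by
  have : (Icc 1 n).filter (fun d => d ≤ x) = Icc 1 x := by
    ext d
    simp only [mem_filter, mem_Icc]
    omega
  rw [this, Int.card_Icc]
  omega

-- The paper's `Ĩ_i`, not reduced modulo `n`.
noncomputable def necklaceSet (n : ℕ) (f : ℤ ≃ ℤ) (i : ℤ) : Finset ℤ :=
  (Icc i (i + (n : ℤ) - 1)).filter fun j => f.symm j < i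

section BoundedAffinePermutation

variable {n : ℕ} {f : ℤ ≃ ℤ}

theorem Equiv.symm_apply_le_self (hlow : ∀ i, i ≤ f i) (j : ℤ) : f.symm j ≤ j := by
  simpa using hlow (f.symm j)

theorem Equiv.sub_le_symm_apply (hup : ∀ i, f i ≤ i + n) (j : ℤ) : j - n ≤ f.symm j := by
  have := hup (f.symm j)
  rw [Equiv.apply_symm_apply] at this
  omega

theorem necklaceSet_add_one_of_apply_eq (hup : ∀ i, f i ≤ i + n) {i : ℤ}
    (hi : f i = i) : necklaceSet n f (i + 1) = necklaceSet n f i := by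
  ext j
  have := f.sub_le_symm_apply hup j
  have : f.symm j = i ↔ j = i := by rw [Equiv.symm_apply_eq, hi]
  simp only [necklaceSet, mem_filter, mem_Icc]
  omega

theorem necklaceSet_add_one_of_apply_ne (hlow : ∀ i, i ≤ f i) (hup : ∀ i, f i ≤ i + n) {i : ℤ}
    (hi : f i ≠ i) : necklaceSet n f (i + 1) = insert (f i) ((necklaceSet n f i).erase i) := by
  ext j
  have := f.sub_le_symm_apply hup j
  have := hlow i
  have : f.symm j = i ↔ j = f i := Equiv.symm_apply_eq f
  simp only [necklaceSet, mem_insert, mem_erase, mem_filter, mem_Icc]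
  omega

theorem card_necklaceSet_add_one (hlow : ∀ i, i ≤ f i) (hup : ∀ i, f i ≤ i + n)
    (i : ℤ) : (necklaceSet n f (i + 1)).card = (necklaceSet n f i).card := by
  by_cases hi : f i = i
  · rw [necklaceSet_add_one_of_apply_eq hup hi]
  have hmem : i ∈ necklaceSet n f i := by
    have := (hlow i).lt_of_ne' hi
    have := hup i
    have := (f.symm_apply_le_self hlow i).lt_of_ne fun h => hi (f.symm_apply_eq.mp h).symm
    simp only [necklaceSet, mem_filter, mem_Icc]
    omega
  have hnot : f i ∉ (necklaceSet n f i).erase i := by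
    simp [necklaceSet]
  rw [necklaceSet_add_one_of_apply_ne hlow hup hi, card_insert_of_notMem hnot,
    card_erase_add_one hmem]

theorem card_necklaceSet_eq (hlow : ∀ i, i ≤ f i) (hup : ∀ i, f i ≤ i + n)
    (i i' : ℤ) : (necklaceSet n f i).card = (necklaceSet n f i').card := by
  suffices h : ∀ i, (necklaceSet n f i).card = (necklaceSet n f 0).card by rw [h i, h i']
  intro i
  induction i using Int.induction_on with
  | zero => rfl
  | succ i ih => rw [card_necklaceSet_add_one hlow hup, ih]
  | pred i ih => rw [← ih, ← card_necklaceSet_add_one hlow hup, sub_add_cancel]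

theorem card_necklaceSet_eq_card_filter (hup : ∀ i, f i ≤ i + n) (i : ℤ) :
    (necklaceSet n f i).card = ((Icc 1 (n : ℤ)).filter fun d => i ≤ f (i - d)).card := by
  refine card_nbij' (fun j => i - f.symm j) (fun d => f (i - d)) ?_ ?_ ?_ ?_
  · intro j hj
    have := f.sub_le_symm_apply hup j
    simp only [necklaceSet, coe_filter, Set.mem_ofPred_eq, mem_Icc] at hj ⊢
    simp only [sub_sub_cancel, Equiv.apply_symm_apply]
    omega
  · intro d hd
    have := hup (i - d)
    simp only [necklaceSet, coe_filter, Set.mem_ofPred_eq, mem_Icc] at hd ⊢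
    simp only [Equiv.symm_apply_apply]
    omega
  · exact fun j _ => by simp
  · exact fun d _ => by simp

theorem sum_card_necklaceSet (hf : ∀ i : ℤ, f (i + n) = f i + n) (hlow : ∀ i, i ≤ f i)
    (hup : ∀ i, f i ≤ i + n) :
    ∑ i ∈ Icc 1 (n : ℤ), ((necklaceSet n f i).card : ℤ) = ∑ m ∈ Icc 1 (n : ℤ), (f m - m) := by
  have hdisp : Function.Periodic (fun m => f m - m) n := fun m => by
    simp only [hf]
    ring
  calc ∑ i ∈ Icc 1 (n : ℤ), ((necklaceSet n f i).card : ℤ)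
      = ∑ i ∈ Icc 1 (n : ℤ), ∑ d ∈ Icc 1 (n : ℤ), if d ≤ f (i - d) - (i - d) then 1 else 0 := by
        refine sum_congr rfl fun i _ => ?_
        rw [card_necklaceSet_eq_card_filter hup, sum_boole]
        congr 3
        ext d
        omega
    _ = ∑ d ∈ Icc 1 (n : ℤ), ∑ m ∈ Icc 1 (n : ℤ), if d ≤ f m - m then 1 else 0 := by
        rw [sum_comm]
        exact sum_congr rfl fun d _ =>
          (hdisp.comp fun e => if d ≤ e then 1 else 0).sum_Icc_one_comp_add (-d)
    _ = ∑ m ∈ Icc 1 (n : ℤ), (f m - m) := by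
        rw [sum_comm]
        refine sum_congr rfl fun m _ => ?_
        rw [sum_boole]
        exact card_Icc_one_filter_le (by linarith [hlow m]) (by linarith [hup m])

theorem necklaceSet_sdiff_singleton_subset (i : ℤ) :
    necklaceSet n f i \ {i} ⊆ (Icc (i + 1) (i + (n : ℤ))).filter fun j => f.symm j < i + 1 := by
  intro j hj
  simp only [necklaceSet, mem_sdiff, mem_singleton, mem_filter, mem_Icc] at hj ⊢
  omega

end BoundedAffinePermutation

/-- Let `f ∈ S̃_n` be a bounded affine permutation of displacement `k`, and for
`i ∈ ℤ` set `Ĩ_i = { j ∈ {i, …, i+n−1} : f⁻¹(j) < i }`.  Then every `Ĩ_i` has exactly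
`k` elements, and `Ĩ_i \ {i} ⊆ Ĩ_{i+1}` (the Grassmann necklace condition). -/
theorem stmt16 (n : ℕ) (hn : 1 ≤ n) (f : ℤ ≃ ℤ)
    (hf : ∀ i : ℤ, f (i + n) = f i + n)
    (hbdd : ∀ i : ℤ, i ≤ f i ∧ f i ≤ i + n)
    (k : ℕ) (hk : (n : ℤ) * (k : ℤ) = ∑ j ∈ Finset.Icc (1 : ℤ) (n : ℤ), (f j - j)) :
    (∀ i : ℤ, ((Finset.Icc i (i + (n : ℤ) - 1)).filter fun j => f.symm j < i).card = k) ∧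
    (∀ i : ℤ, ((Finset.Icc i (i + (n : ℤ) - 1)).filter fun j => f.symm j < i) \ {i} ⊆
        (Finset.Icc (i + 1) (i + (n : ℤ))).filter fun j => f.symm j < i + 1) := by
  have hlow : ∀ i, i ≤ f i := fun i => (hbdd i).1
  have hup : ∀ i, f i ≤ i + n := fun i => (hbdd i).2
  refine ⟨fun i => ?_, necklaceSet_sdiff_singleton_subset⟩
  have hsum := sum_card_necklaceSet hf hlow hup
  rw [sum_congr rfl fun j _ => congrArg _ (card_necklaceSet_eq hlow hup j i), sum_const,
    Int.card_Icc, add_sub_cancel_right, Int.toNat_natCast, nsmul_eq_mul, ← hk] at hsum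
  exact_mod_cast mul_left_cancel₀ (by omega) hsum
end
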